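/- arXiv:1907.08655 — 8 statements merged into one kernel-verified Lean document; each statement's English description precedes it below -/
import Mathlib

section
/- The map f(x) = λx + δ for 0 ≤ x < η and f(x) = μ(λx + δ − 1) for η ≤ x < 1, where η = (1−δ)/λ, is injective on [0,1), given 0 < λ < 1, μ > 0, and 1 − λ < δ < d where d = 1 if λμ < 1 and d = μ(1−λ)/(μ−1) if λμ ≥ 1. -/
/-!
Both branches of `f` are increasing affine maps, hence injective, and the branches have disjoint
images: the left one takes values `λx + δ ≥ δ`, while the right one stays below `μ(λ + δ − 1)`,
which the bound `δ < d_{λ,μ}` makes at most `δ`.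
-/

open Set

theorem injOn_ite_lt {α β : Type*} [LinearOrder α] {f g : α → β} {s : Set α} {c : α}
    (hf : InjOn f s) (hg : InjOn g s) (hfg : ∀ x ∈ s, ∀ y ∈ s, f x ≠ g y) :
    InjOn (fun x => if x < c then f x else g x) s := by
  intro x hx y hy h
  dsimp only at h
  split_ifs at h
  exacts [hf hx hy h, (hfg x hx y hy h).elim, (hfg y hy x hx h.symm).elim, hg hx hy h]

theorem mu_mul_lam_add_del_sub_one_le {lam mu del : ℝ} (hlam0 : 0 < lam) (hlam1 : lam < 1)
    (hdel1 : 1 - lam < del)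
    (hdel2 : del < if lam * mu < 1 then 1 else mu * (1 - lam) / (mu - 1)) :
    mu * (lam + del - 1) ≤ del := by
  split_ifs at hdel2 with h
  · rcases le_or_gt mu 1 with hmu1 | hmu1
    · nlinarith
    · -- `μ(λ + δ − 1) − δ = (λμ − 1) + (1 − δ)(1 − μ)`, a sum of two negative terms
      nlinarith
  · have hmu1 : 1 < mu := by nlinarith
    rw [lt_div_iff₀ (by linarith)] at hdel2
    linarith

theorem stmt0 (lam mu del : ℝ) (hlam0 : 0 < lam) (hlam1 : lam < 1) (hmu : 0 < mu)
    (hdel1 : 1 - lam < del)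
    (hdel2 : del < if lam * mu < 1 then 1 else mu * (1 - lam) / (mu - 1)) :
    Set.InjOn
      (fun x : ℝ => if x < (1 - del) / lam then lam * x + del else mu * (lam * x + del - 1))
      (Set.Ico 0 1) := by
  have hleft : Function.Injective fun x : ℝ => lam * x + del :=
    (add_left_injective del).comp (mul_right_injective₀ hlam0.ne')
  have hright : Function.Injective fun x : ℝ => mu * (lam * x + del - 1) :=
    (mul_right_injective₀ hmu.ne').comp ((sub_left_injective (b := 1)).comp hleft)
  have hjump := mu_mul_lam_add_del_sub_one_le hlam0 hlam1 hdel1 hdel2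
  refine injOn_ite_lt hleft.injOn hright.injOn fun x hx y hy => ne_of_gt ?_
  calc mu * (lam * y + del - 1) < mu * (lam + del - 1) := by gcongr; nlinarith [hy.2]
    _ ≤ del := hjump
    _ ≤ lam * x + del := by nlinarith [hx.1]
end

section
/- Let 0 < λ < 1, μ > 0, and 0 < ρ < r_{λ,μ}, where r_{λ,μ} = 1 if λμ < 1 and r_{λ,μ} = −log λ / log μ if λμ ≥ 1. Then the double series Ψ_ρ(λ,μ) = Σ_{k≥1} Σ_{1≤h≤kρ} λ^k μ^h satisfies Σ_{k≥1} (⌊(k+1)ρ⌋ − ⌊kρ⌋) λ^k μ^{⌊kρ⌋} = ((1−λ)/(λμ)) · Ψ_ρ(λ,μ). -/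
/-!
Let `F_k = λ^(k+1) Σ_{h=1}^{⌊(k+1)ρ⌋} μ^h` be the `k`-th term of `Ψ`. Since `0 < ρ < 1`, the floors
`⌊(k+1)ρ⌋` and `⌊(k+2)ρ⌋` differ by `0` or `1`, so `F_{k+1} - λ F_k` is either `0` or the single
extra term `λ^(k+2) μ^(⌊(k+1)ρ⌋+1)`; in both cases it is `λμ` times the `k`-th term of `σ`.
As `F_0 = 0`, summing over `k` telescopes to `λμ σ = (1 - λ) Ψ`. The series converge because
`F_k ≤ ρ (k+1) (λ max(μ,1)^ρ)^(k+1)`, and `ρ < r_{λ,μ}` is what makes `λ max(μ,1)^ρ < 1`.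
-/

/-- The Hecke–Mahler series Ψ_ρ(λ,μ) = Σ_{k≥1} Σ_{1≤h≤kρ} λ^k μ^h. -/
noncomputable def Psi (lam mu rho : ℝ) : ℝ :=
  ∑' k : ℕ, ∑ h ∈ Finset.Icc 1 (⌊((k : ℝ) + 1) * rho⌋.toNat), lam ^ (k + 1) * mu ^ h

/-- σ(λ,μ,ρ) = Σ_{k≥1} (⌊(k+1)ρ⌋ − ⌊kρ⌋) λ^k μ^{⌊kρ⌋}. -/
noncomputable def sigmaFn (lam mu rho : ℝ) : ℝ :=
  ∑' k : ℕ, ((⌊((k : ℝ) + 2) * rho⌋ - ⌊((k : ℝ) + 1) * rho⌋ : ℤ) : ℝ) *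
    lam ^ (k + 1) * mu ^ ⌊((k : ℝ) + 1) * rho⌋

open Finset

lemma tsum_succ_sub_mul_eq {R : Type*} [Ring R] [TopologicalSpace R] [IsTopologicalRing R]
    [T2Space R] {f : ℕ → R} (hf : Summable f) (hf0 : f 0 = 0) (c : R) :
    ∑' k, (f (k + 1) - c * f k) = (1 - c) * ∑' k, f k := by
  have hshift : ∑' k, f k = ∑' k, f (k + 1) := by
    rw [hf.tsum_eq_zero_add, hf0, zero_add]
  have hsucc : Summable fun k => f (k + 1) := (summable_nat_add_iff 1).mpr hf
  rw [hsucc.tsum_sub (hf.mul_left c), hf.tsum_mul_left, ← hshift, sub_mul, one_mul]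

lemma Int.floor_add_le_floor_add_one {α : Type*} [Field α] [LinearOrder α] [IsStrictOrderedRing α]
    [FloorRing α] {x r : α} (hr : r < 1) : ⌊x + r⌋ ≤ ⌊x⌋ + 1 := by
  have : ⌊x + r⌋ < ⌊x⌋ + 2 := by
    rw [Int.floor_lt]
    push_cast
    linarith [Int.lt_floor_add_one x]
  omega

lemma sum_Icc_pow_toNat_sub {K : Type*} [Field K] (mu : K) {a b : ℤ} (ha : 0 ≤ a)
    (hab : a ≤ b) (hba : b ≤ a + 1) :
    ∑ h ∈ Icc 1 b.toNat, mu ^ h - ∑ h ∈ Icc 1 a.toNat, mu ^ h = ((b - a : ℤ) : K) * mu * mu ^ a := by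
  lift a to ℕ using ha
  obtain rfl | rfl : b = a ∨ b = a + 1 := by omega
  · simp
  · rw [show ((a : ℤ) + 1).toNat = a + 1 by omega, sum_Icc_succ_top (by omega)]
    simp [pow_succ, mul_comm]

lemma sum_Icc_pow_le_mul_max_pow {mu : ℝ} (hmu : 0 ≤ mu) (n : ℕ) :
    ∑ h ∈ Icc 1 n, mu ^ h ≤ n * max mu 1 ^ n := by
  calc ∑ h ∈ Icc 1 n, mu ^ h ≤ ∑ _h ∈ Icc 1 n, max mu 1 ^ n :=
        sum_le_sum fun h hh => (pow_le_pow_left₀ hmu (le_max_left mu 1) h).trans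
          (pow_le_pow_right₀ (le_max_right mu 1) (mem_Icc.mp hh).2)
    _ = n * max mu 1 ^ n := by simp

/-- The exponent `r_{λ,μ}`. -/
noncomputable def criticalExponent (lam mu : ℝ) : ℝ :=
  if lam * mu < 1 then 1 else -Real.log lam / Real.log mu

lemma criticalExponent_le_one {lam mu : ℝ} (hlam0 : 0 < lam) (hlam1 : lam < 1) (hmu : 0 < mu) :
    criticalExponent lam mu ≤ 1 := by
  unfold criticalExponent
  split_ifs with h
  · exact le_rfl
  · push Not at h
    have hlogmu : 0 < Real.log mu := Real.log_pos (by nlinarith)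
    have : 0 ≤ Real.log lam + Real.log mu := by
      rw [← Real.log_mul hlam0.ne' hmu.ne']
      exact Real.log_nonneg h
    rw [div_le_one hlogmu]
    linarith

lemma lam_mul_max_rpow_lt_one {lam mu rho : ℝ} (hlam0 : 0 < lam) (hlam1 : lam < 1)
    (hmu : 0 < mu) (hrho : rho < criticalExponent lam mu) :
    lam * max mu 1 ^ rho < 1 := by
  have hpos : 0 < lam * max mu 1 ^ rho := by positivity
  rw [← Real.log_neg_iff hpos, Real.log_mul hlam0.ne' (by positivity),
    Real.log_rpow (by positivity)]
  have hloglam : Real.log lam < 0 := Real.log_neg hlam0 hlam1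
  rcases le_or_gt mu 1 with hmu1 | hmu1
  · simp [max_eq_right hmu1, hloglam]
  rw [max_eq_left hmu1.le]
  have hlogmu : 0 < Real.log mu := Real.log_pos hmu1
  unfold criticalExponent at hrho
  split_ifs at hrho with h
  · have : Real.log lam + Real.log mu < 0 := by
      rw [← Real.log_mul hlam0.ne' hmu.ne']
      exact Real.log_neg (by positivity) h
    nlinarith
  · rw [lt_div_iff₀ hlogmu] at hrho
    linarith

section HeckeMahler

variable (lam mu rho : ℝ)

noncomputable def psiTerm (k : ℕ) : ℝ :=
  ∑ h ∈ Icc 1 (⌊((k : ℝ) + 1) * rho⌋.toNat), lam ^ (k + 1) * mu ^ h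

noncomputable def sigmaTerm (k : ℕ) : ℝ :=
  ((⌊((k : ℝ) + 2) * rho⌋ - ⌊((k : ℝ) + 1) * rho⌋ : ℤ) : ℝ) *
    lam ^ (k + 1) * mu ^ ⌊((k : ℝ) + 1) * rho⌋

lemma psi_eq_tsum_psiTerm : Psi lam mu rho = ∑' k, psiTerm lam mu rho k := rfl

lemma sigmaFn_eq_tsum_sigmaTerm : sigmaFn lam mu rho = ∑' k, sigmaTerm lam mu rho k := rfl

variable {lam mu rho}

lemma psiTerm_eq_mul_sum (k : ℕ) :
    psiTerm lam mu rho k = lam ^ (k + 1) * ∑ h ∈ Icc 1 (⌊((k : ℝ) + 1) * rho⌋.toNat), mu ^ h :=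
  (mul_sum ..).symm

lemma psiTerm_zero (hrho0 : 0 ≤ rho) (hrho1 : rho < 1) : psiTerm lam mu rho 0 = 0 := by
  simp [psiTerm, Int.floor_eq_zero_iff.mpr ⟨hrho0, hrho1⟩]

lemma psiTerm_nonneg (hlam : 0 ≤ lam) (hmu : 0 ≤ mu) (k : ℕ) : 0 ≤ psiTerm lam mu rho k :=
  sum_nonneg fun _ _ => by positivity

lemma psiTerm_le (hlam : 0 ≤ lam) (hmu : 0 ≤ mu) (hrho : 0 ≤ rho) (k : ℕ) :
    psiTerm lam mu rho k ≤ rho * (((k + 1 : ℕ) : ℝ) * (lam * max mu 1 ^ rho) ^ (k + 1)) := by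
  have hn : (⌊((k : ℝ) + 1) * rho⌋.toNat : ℝ) ≤ rho * ((k + 1 : ℕ) : ℝ) := by
    have hnonneg : (0 : ℝ) ≤ ((k : ℝ) + 1) * rho := by positivity
    rw [← Int.cast_natCast, Int.toNat_of_nonneg (Int.floor_nonneg.mpr hnonneg), mul_comm]
    push_cast
    exact Int.floor_le _
  set n := ⌊((k : ℝ) + 1) * rho⌋.toNat
  have hpow : max mu 1 ^ n ≤ (max mu 1 ^ rho) ^ (k + 1) := by
    rw [← Real.rpow_natCast, ← Real.rpow_mul_natCast (by positivity)]
    exact Real.rpow_le_rpow_of_exponent_le (le_max_right mu 1) hn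
  calc psiTerm lam mu rho k ≤ lam ^ (k + 1) * (n * max mu 1 ^ n) := by
        rw [psiTerm_eq_mul_sum]
        exact mul_le_mul_of_nonneg_left (sum_Icc_pow_le_mul_max_pow hmu n) (by positivity)
    _ ≤ lam ^ (k + 1) * (rho * ((k + 1 : ℕ) : ℝ) * (max mu 1 ^ rho) ^ (k + 1)) := by
        gcongr
    _ = rho * (((k + 1 : ℕ) : ℝ) * (lam * max mu 1 ^ rho) ^ (k + 1)) := by ring

lemma summable_psiTerm (hlam : 0 ≤ lam) (hmu : 0 ≤ mu) (hrho : 0 ≤ rho)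
    (hq : lam * max mu 1 ^ rho < 1) : Summable (psiTerm lam mu rho) := by
  have hgeom : Summable fun k : ℕ => (k : ℝ) * (lam * max mu 1 ^ rho) ^ k := by
    simpa using summable_pow_mul_geometric_of_norm_lt_one 1
      (by rwa [Real.norm_of_nonneg (by positivity)])
  refine Summable.of_nonneg_of_le (psiTerm_nonneg hlam hmu) (psiTerm_le hlam hmu hrho)
    (((summable_nat_add_iff 1).mpr hgeom).mul_left rho)

lemma psiTerm_succ_sub_mul (hrho0 : 0 ≤ rho) (hrho1 : rho < 1) (k : ℕ) :
    psiTerm lam mu rho (k + 1) - lam * psiTerm lam mu rho k = lam * mu * sigmaTerm lam mu rho k := by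
  set a := ⌊((k : ℝ) + 1) * rho⌋
  have hb : ⌊(((k + 1 : ℕ) : ℝ) + 1) * rho⌋ = ⌊((k : ℝ) + 1) * rho + rho⌋ := by
    push_cast; ring_nf
  have hb' : ⌊((k : ℝ) + 2) * rho⌋ = ⌊((k : ℝ) + 1) * rho + rho⌋ := by ring_nf
  have ha : 0 ≤ a := Int.floor_nonneg.mpr (by positivity)
  have hab : a ≤ ⌊((k : ℝ) + 1) * rho + rho⌋ := Int.floor_le_floor (by linarith)
  have hba := Int.floor_add_le_floor_add_one (x := ((k : ℝ) + 1) * rho) hrho1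
  rw [psiTerm_eq_mul_sum, psiTerm_eq_mul_sum, sigmaTerm, hb, hb', ← mul_assoc, ← pow_succ',
    ← mul_sub, sum_Icc_pow_toNat_sub mu ha hab hba]
  ring

end HeckeMahler

theorem stmt3 (lam mu rho : ℝ) (hlam0 : 0 < lam) (hlam1 : lam < 1) (hmu : 0 < mu)
    (hrho0 : 0 < rho)
    (hrho1 : rho < if lam * mu < 1 then 1 else -Real.log lam / Real.log mu) :
    sigmaFn lam mu rho = (1 - lam) / (lam * mu) * Psi lam mu rho := by
  have hrho_lt_one : rho < 1 := hrho1.trans_le (criticalExponent_le_one hlam0 hlam1 hmu)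
  have hsum : Summable (psiTerm lam mu rho) := summable_psiTerm hlam0.le hmu.le hrho0.le
    (lam_mul_max_rpow_lt_one hlam0 hlam1 hmu hrho1)
  have htelescope : lam * mu * sigmaFn lam mu rho = (1 - lam) * Psi lam mu rho := by
    rw [sigmaFn_eq_tsum_sigmaTerm, psi_eq_tsum_psiTerm, ← tsum_mul_left,
      ← tsum_succ_sub_mul_eq hsum (psiTerm_zero hrho0.le hrho_lt_one)]
    exact tsum_congr fun k => (psiTerm_succ_sub_mul hrho0.le hrho_lt_one k).symm
  field_simp
  linarith
end

section
/- If λμ < 1 with 0 < λ < 1, μ > 0, then lim_{ρ→1⁻} Ψ_ρ(λ,μ) = λ²μ / ((1−λ)(1−λμ)), where Ψ_ρ(λ,μ) = Σ_{k≥1} Σ_{1≤h≤kρ} λ^k μ^h; in particular 0 < Ψ_ρ(λ,μ) < λ²μ/((1−λ)(1−λμ)) for all 0 < ρ < 1. -/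
/-!
Write `Ψ_ρ = ∑_k r_k(⌊(k+1)ρ⌋)` with `r_k(n) = ∑_{h=1}^{n} λ^{k+1} μ^h`, which is strictly increasing
in `n`. For `ρ < 1` the cut-off `⌊(k+1)ρ⌋` is at most `k`, and it equals `k` once `ρ > k/(k+1)`, so
the series is dominated by the diagonal series `∑_k r_k(k)` and converges to it termwise as `ρ → 1⁻`
(Tannery's theorem). The diagonal series is `λ²μ` times the Cauchy product of the geometric series
in `λμ` and in `λ`. Strictness comes from one term where the cut-off is `0 < ⌊(k+1)ρ⌋ < k`.
-/

open Filter

open Topology Finset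

noncomputable def psiRow (lam mu : ℝ) (k n : ℕ) : ℝ :=
  ∑ h ∈ Icc 1 n, lam ^ (k + 1) * mu ^ h

lemma Psi_eq_tsum_psiRow (lam mu rho : ℝ) :
    Psi lam mu rho = ∑' k : ℕ, psiRow lam mu k ⌊((k : ℝ) + 1) * rho⌋₊ := by
  simp only [Psi, psiRow, Int.floor_toNat]

section psiRow

variable {lam mu : ℝ}

lemma psiRow_zero (lam mu : ℝ) (k : ℕ) : psiRow lam mu k 0 = 0 := by
  simp [psiRow]

lemma psiRow_nonneg (hlam : 0 ≤ lam) (hmu : 0 ≤ mu) (k n : ℕ) : 0 ≤ psiRow lam mu k n :=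
  sum_nonneg fun _ _ => by positivity

lemma psiRow_mono (hlam : 0 ≤ lam) (hmu : 0 ≤ mu) (k : ℕ) : Monotone (psiRow lam mu k) :=
  fun _ _ hmn => sum_le_sum_of_subset_of_nonneg (Icc_subset_Icc_right hmn)
    fun _ _ _ => by positivity

lemma psiRow_strictMono (hlam : 0 < lam) (hmu : 0 < mu) (k : ℕ) :
    StrictMono (psiRow lam mu k) := by
  refine strictMono_nat_of_lt_succ fun n => ?_
  rw [psiRow, psiRow, sum_Icc_succ_top (by omega)]
  exact lt_add_of_pos_right _ (by positivity)

lemma psiRow_succ_diag (lam mu : ℝ) (k : ℕ) :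
    psiRow lam mu (k + 1) (k + 1) =
      lam ^ 2 * mu * ∑ ij ∈ antidiagonal k, (lam * mu) ^ ij.1 * lam ^ ij.2 := by
  rw [psiRow, show Icc 1 (k + 1) = Ico 1 (k + 2) from rfl, sum_Ico_eq_sum_range,
    Nat.sum_antidiagonal_eq_sum_range_succ (fun i j => (lam * mu) ^ i * lam ^ j), mul_sum]
  refine sum_congr rfl fun i hi => ?_
  obtain ⟨j, rfl⟩ := Nat.exists_eq_add_of_le (Nat.lt_succ_iff.mp (mem_range.mp hi))
  rw [Nat.add_sub_cancel_left]
  ring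

theorem hasSum_sum_antidiagonal_geometric {a b : ℝ} (ha : |a| < 1) (hb : |b| < 1) :
    HasSum (fun n => ∑ ij ∈ antidiagonal n, a ^ ij.1 * b ^ ij.2) ((1 - a)⁻¹ * (1 - b)⁻¹) := by
  have hna : Summable (fun n => ‖a ^ n‖) := by
    simpa [norm_pow] using summable_geometric_of_lt_one (abs_nonneg a) ha
  have hnb : Summable (fun n => ‖b ^ n‖) := by
    simpa [norm_pow] using summable_geometric_of_lt_one (abs_nonneg b) hb
  rw [← tsum_geometric_of_abs_lt_one ha, ← tsum_geometric_of_abs_lt_one hb,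
    tsum_mul_tsum_eq_tsum_sum_antidiagonal_of_summable_norm hna hnb]
  exact (summable_sum_mul_antidiagonal_of_summable_norm' hna hna.of_norm hnb hnb.of_norm).hasSum

theorem hasSum_psiRow_diag (hlam : |lam| < 1) (hlm : |lam * mu| < 1) :
    HasSum (fun k => psiRow lam mu k k) (lam ^ 2 * mu / ((1 - lam) * (1 - lam * mu))) := by
  have h := (hasSum_sum_antidiagonal_geometric hlm hlam).mul_left (lam ^ 2 * mu)
  rw [← funext (psiRow_succ_diag lam mu)] at h
  rwa [← hasSum_nat_add_iff' 1, sum_range_one, psiRow_zero, sub_zero, div_eq_mul_inv, mul_inv,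
    mul_comm (1 - lam)⁻¹]

end psiRow

section floor

variable {rho : ℝ}

lemma floor_succ_mul_le (hrho : rho < 1) (k : ℕ) : ⌊((k : ℝ) + 1) * rho⌋₊ ≤ k := by
  refine Nat.lt_succ_iff.mp ((Nat.floor_lt' k.succ_ne_zero).mpr ?_)
  push_cast
  nlinarith

lemma eventually_floor_succ_mul_eq (k : ℕ) :
    ∀ᶠ rho in 𝓝[<] (1 : ℝ), ⌊((k : ℝ) + 1) * rho⌋₊ = k := by
  filter_upwards [Ioo_mem_nhdsLT (show (k : ℝ) / (k + 1) < 1 by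
    rw [div_lt_one (by positivity)]; linarith)] with rho ⟨hlo, hhi⟩
  rw [div_lt_iff₀ (by positivity)] at hlo
  rw [Nat.floor_eq_iff (by nlinarith)]
  constructor <;> nlinarith

lemma exists_floor_succ_mul_pos (hrho : 0 < rho) : ∃ k : ℕ, 0 < ⌊((k : ℝ) + 1) * rho⌋₊ := by
  obtain ⟨k, hk⟩ := exists_nat_ge rho⁻¹
  refine ⟨k, Nat.floor_pos.mpr ?_⟩
  have : rho⁻¹ * rho ≤ k * rho := mul_le_mul_of_nonneg_right hk hrho.le
  rw [inv_mul_cancel₀ hrho.ne'] at this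
  nlinarith

lemma exists_floor_succ_mul_lt (hrho : rho < 1) : ∃ k : ℕ, ⌊((k : ℝ) + 1) * rho⌋₊ < k := by
  obtain ⟨n, hn⟩ := exists_nat_one_div_lt (sub_pos.mpr hrho)
  refine ⟨n + 1, (Nat.floor_lt' n.succ_ne_zero).mpr ?_⟩
  rw [div_lt_iff₀ (by positivity)] at hn
  push_cast
  nlinarith

end floor

theorem stmt5 (lam mu : ℝ) (hlam0 : 0 < lam) (hlam1 : lam < 1) (hmu : 0 < mu)
    (hlm : lam * mu < 1) :
    Tendsto (fun rho => Psi lam mu rho) (nhdsWithin 1 (Set.Iio 1))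
      (nhds (lam ^ 2 * mu / ((1 - lam) * (1 - lam * mu)))) ∧
    ∀ rho ∈ Set.Ioo (0 : ℝ) 1,
      0 < Psi lam mu rho ∧ Psi lam mu rho < lam ^ 2 * mu / ((1 - lam) * (1 - lam * mu)) := by
  have hdiag : HasSum (fun k => psiRow lam mu k k) (lam ^ 2 * mu / ((1 - lam) * (1 - lam * mu))) :=
    hasSum_psiRow_diag (by rwa [abs_of_pos hlam0]) (by rwa [abs_of_pos (mul_pos hlam0 hmu)])
  have hle {rho : ℝ} (hrho : rho < 1) (k : ℕ) :
      psiRow lam mu k ⌊((k : ℝ) + 1) * rho⌋₊ ≤ psiRow lam mu k k :=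
    psiRow_mono hlam0.le hmu.le k (floor_succ_mul_le hrho k)
  have hsum {rho : ℝ} (hrho : rho < 1) :
      Summable fun k => psiRow lam mu k ⌊((k : ℝ) + 1) * rho⌋₊ :=
    hdiag.summable.of_nonneg_of_le (fun _ => psiRow_nonneg hlam0.le hmu.le _ _) (hle hrho)
  simp only [Psi_eq_tsum_psiRow, ← hdiag.tsum_eq]
  refine ⟨?_, fun rho ⟨hrho0, hrho1⟩ => ⟨?_, ?_⟩⟩
  · refine tendsto_tsum_of_dominated_convergence hdiag.summable
      (fun k => tendsto_const_nhds.congr' ?_) ?_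
    · filter_upwards [eventually_floor_succ_mul_eq k] with rho h
      rw [h]
    · filter_upwards [self_mem_nhdsWithin] with rho hrho k
      rw [Real.norm_of_nonneg (psiRow_nonneg hlam0.le hmu.le _ _)]
      exact hle hrho k
  · obtain ⟨k, hk⟩ := exists_floor_succ_mul_pos hrho0
    refine (hsum hrho1).tsum_pos (fun _ => psiRow_nonneg hlam0.le hmu.le _ _) k ?_
    simpa only [psiRow_zero] using psiRow_strictMono hlam0 hmu k hk
  · obtain ⟨k, hk⟩ := exists_floor_succ_mul_lt hrho1
    exact (hsum hrho1).tsum_lt_tsum (hle hrho1) (psiRow_strictMono hlam0 hmu k hk) hdiag.summable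
end

section
/- For 0 < λ < 1, μ > 0, the map ρ ↦ δ(λ,μ,ρ) is strictly increasing on the interval (0, r_{λ,μ}) and its image is contained in the interval (1−λ, d_{λ,μ}). -/
/-- δ(λ,μ,ρ) = (1−λ)(1+μσ)/(1+(μ−1)σ). -/
noncomputable def deltaFn (lam mu rho : ℝ) : ℝ :=
  (1 - lam) * (1 + mu * sigmaFn lam mu rho) / (1 + (mu - 1) * sigmaFn lam mu rho)

/-- r_{λ,μ}. -/
noncomputable def rFn (lam mu : ℝ) : ℝ :=
  if lam * mu < 1 then 1 else -Real.log lam / Real.log mu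

/-- d_{λ,μ}. -/
noncomputable def dFn (lam mu : ℝ) : ℝ :=
  if lam * mu < 1 then 1 else (mu - lam * mu) / (mu - 1)

/-!
For `0 < ρ < 1` the sequence `⌊j ρ⌋` increases by `0` or `1` at each step, so only the steps
contribute to `σ`, and `σ = ∑ₘ λ^{K m} μ^m`, where `K m = ⌈(m + 1) / ρ⌉ - 1` is the index at which
`⌊j ρ⌋` steps from `m` to `m + 1`. For `ρ < r_{λ,μ}` this series is dominated by a geometric series
of ratio `λ^{1/ρ} μ < 1`. Each `K m` decreases with `ρ`, strictly for large `m`, which makes `σ`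
strictly increasing; and `K m ≥ m + 1`, strictly for large `m`, gives `σ < λ / (1 - λμ)` when
`λμ < 1`. Finally `δ = (1 - λ)(1 + μσ) / (1 + (μ - 1)σ)` is a Möbius function of `σ` with
determinant `1 - λ > 0`: it increases, equals `1 - λ` at `σ = 0` and `1` at `σ = λ / (1 - λμ)`, and
stays below its limit `(μ - λμ) / (μ - 1)` at `σ = ∞` when `μ > 1`.
-/

open Set

/-- For `0 < ρ ≤ 1` the floor sequence `⌊j ρ⌋` steps from `m` to `m + 1` exactly at
`j = jumpIndex ρ m`. -/
noncomputable def jumpIndex (ρ : ℝ) (m : ℕ) : ℕ := ⌈((m : ℝ) + 1) / ρ⌉₊ - 1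

section jumpIndex

variable {ρ : ℝ} {m j : ℕ}

lemma jumpIndex_add_one (hρ : 0 < ρ) (m : ℕ) : jumpIndex ρ m + 1 = ⌈((m : ℝ) + 1) / ρ⌉₊ :=
  Nat.sub_add_cancel (Nat.ceil_pos.2 (by positivity))

lemma jumpIndex_eq_iff (hρ : 0 < ρ) :
    jumpIndex ρ m = j ↔ (j : ℝ) * ρ < m + 1 ∧ (m : ℝ) + 1 ≤ (j + 1) * ρ := by
  rw [← add_left_inj 1, jumpIndex_add_one hρ, Nat.ceil_eq_iff j.add_one_ne_zero,
    Nat.add_sub_cancel, lt_div_iff₀ hρ, div_le_iff₀ hρ]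
  push_cast
  rfl

lemma floor_mul_eq_of_jump (hρ : ρ ≤ 1) (h : (j : ℝ) * ρ < m + 1 ∧ (m : ℝ) + 1 ≤ (j + 1) * ρ) :
    ⌊(j : ℝ) * ρ⌋ = m ∧ ⌊((j : ℝ) + 1) * ρ⌋ = m + 1 := by
  constructor <;> rw [Int.floor_eq_iff] <;> push_cast <;> constructor <;> linarith

lemma floor_mul_jumpIndex (h0 : 0 < ρ) (h1 : ρ ≤ 1) (m : ℕ) :
    ⌊(jumpIndex ρ m : ℝ) * ρ⌋ = m ∧ ⌊((jumpIndex ρ m : ℝ) + 1) * ρ⌋ = m + 1 :=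
  floor_mul_eq_of_jump h1 ((jumpIndex_eq_iff h0).1 rfl)

lemma jumpIndex_injective (h0 : 0 < ρ) (h1 : ρ ≤ 1) : Function.Injective (jumpIndex ρ) :=
  fun m₁ m₂ h ↦ by
    have := (floor_mul_jumpIndex h0 h1 m₁).1
    rwa [h, (floor_mul_jumpIndex h0 h1 m₂).1, Nat.cast_inj, eq_comm] at this

lemma jumpIndex_floor_of_floor_ne (h0 : 0 < ρ) (h : ⌊((j : ℝ) + 1) * ρ⌋ ≠ ⌊(j : ℝ) * ρ⌋) :
    jumpIndex ρ ⌊(j : ℝ) * ρ⌋₊ = j := by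
  refine (jumpIndex_eq_iff h0).2 ⟨Nat.lt_floor_add_one _, not_lt.1 fun hlt ↦ h ?_⟩
  have hle : (⌊(j : ℝ) * ρ⌋₊ : ℝ) ≤ j * ρ := Nat.floor_le (by positivity)
  rw [(Int.floor_eq_iff (z := ⌊(j : ℝ) * ρ⌋₊)).2 ⟨by push_cast; linarith, hlt⟩,
    (Int.floor_eq_iff (z := ⌊(j : ℝ) * ρ⌋₊)).2 ⟨hle, by push_cast; linarith⟩]

lemma lt_jumpIndex (h0 : 0 < ρ) (h1 : ρ < 1) (m : ℕ) : m < jumpIndex ρ m := by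
  have h := ((jumpIndex_eq_iff (m := m) h0).1 rfl).2
  exact_mod_cast (show (m : ℝ) < jumpIndex ρ m by nlinarith)

lemma jumpIndex_le_jumpIndex {ρ₁ ρ₂ : ℝ} (h0 : 0 < ρ₁) (h : ρ₁ ≤ ρ₂) (m : ℕ) :
    jumpIndex ρ₂ m ≤ jumpIndex ρ₁ m :=
  Nat.sub_le_sub_right (Nat.ceil_mono (div_le_div_of_nonneg_left (by positivity) h0 h)) 1

lemma exists_jumpIndex_lt {ρ₁ ρ₂ : ℝ} (h0 : 0 < ρ₁) (h : ρ₁ < ρ₂) :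
    ∃ m, jumpIndex ρ₂ m < jumpIndex ρ₁ m := by
  have h0' : 0 < ρ₂ := h0.trans h
  have hc : 0 < ρ₁⁻¹ - ρ₂⁻¹ := sub_pos.2 (inv_strictAnti₀ h0 h)
  obtain ⟨m, hm⟩ := exists_nat_gt (ρ₁⁻¹ - ρ₂⁻¹)⁻¹
  refine ⟨m, ?_⟩
  have hgap : ((m : ℝ) + 1) / ρ₂ + 1 < ((m : ℝ) + 1) / ρ₁ := by
    rw [inv_lt_iff_one_lt_mul₀ hc] at hm
    rw [div_eq_mul_inv, div_eq_mul_inv]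
    nlinarith
  have : ⌈((m : ℝ) + 1) / ρ₂⌉₊ < ⌈((m : ℝ) + 1) / ρ₁⌉₊ :=
    Nat.lt_ceil.2 ((Nat.ceil_lt_add_one (by positivity)).trans hgap)
  have := jumpIndex_add_one h0' m
  have := jumpIndex_add_one h0 m
  omega

end jumpIndex

section series

variable {lam mu : ℝ}

lemma tsum_pow_mul_pow_lt_of_lt (hlam0 : 0 < lam) (hlam1 : lam < 1) (hmu : 0 < mu)
    {a b : ℕ → ℕ} (hab : ∀ m, b m ≤ a m) {n : ℕ} (hn : b n < a n)
    (hb : Summable fun m ↦ lam ^ b m * mu ^ m) :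
    ∑' m, lam ^ a m * mu ^ m < ∑' m, lam ^ b m * mu ^ m :=
  Summable.tsum_lt_tsum_of_nonneg (fun _ ↦ by positivity)
    (fun m ↦ mul_le_mul_of_nonneg_right (pow_le_pow_of_le_one hlam0.le hlam1.le (hab m))
      (by positivity))
    (mul_lt_mul_of_pos_right (pow_lt_pow_right_of_lt_one₀ hlam0 hlam1 hn) (by positivity)) hb

lemma summable_pow_jumpIndex_mul_pow (hlam0 : 0 < lam) (hlam1 : lam < 1) (hmu : 0 < mu)
    {ρ : ℝ} (hρ : 0 < ρ) (hq : lam ^ ρ⁻¹ * mu < 1) :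
    Summable fun m ↦ lam ^ jumpIndex ρ m * mu ^ m := by
  refine Summable.of_nonneg_of_le (fun _ ↦ by positivity) (fun m ↦ ?_)
    ((summable_geometric_of_lt_one (by positivity) hq).mul_left (lam⁻¹ * lam ^ ρ⁻¹))
  have hK : lam ^ (jumpIndex ρ m + 1) ≤ (lam ^ ρ⁻¹) ^ (m + 1) := by
    rw [← Real.rpow_natCast, ← Real.rpow_natCast, ← Real.rpow_mul hlam0.le]
    refine Real.rpow_le_rpow_of_exponent_ge hlam0 hlam1.le ?_
    rw [jumpIndex_add_one hρ, ← div_eq_inv_mul]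
    exact_mod_cast Nat.le_ceil _
  calc lam ^ jumpIndex ρ m * mu ^ m = lam⁻¹ * lam ^ (jumpIndex ρ m + 1) * mu ^ m := by
        field_simp; ring
    _ ≤ lam⁻¹ * (lam ^ ρ⁻¹) ^ (m + 1) * mu ^ m := by gcongr
    _ = lam⁻¹ * lam ^ ρ⁻¹ * (lam ^ ρ⁻¹ * mu) ^ m := by ring

end series

lemma sigmaFn_eq_tsum_jumpIndex (lam mu : ℝ) {ρ : ℝ} (h0 : 0 < ρ) (h1 : ρ < 1) :
    sigmaFn lam mu ρ = ∑' m, lam ^ jumpIndex ρ m * mu ^ m := by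
  set F : ℕ → ℝ := fun j ↦
    ((⌊((j : ℝ) + 1) * ρ⌋ - ⌊(j : ℝ) * ρ⌋ : ℤ) : ℝ) * lam ^ j * mu ^ ⌊(j : ℝ) * ρ⌋
  have hshift : sigmaFn lam mu ρ = ∑' j, F j := by
    rw [← Nat.succ_injective.tsum_eq (f := F)]
    · simp only [sigmaFn, F, Nat.succ_eq_add_one, Nat.cast_add, Nat.cast_one, add_assoc,
        one_add_one_eq_two]
    · rintro (_ | j) hj
      · simp [F, Int.floor_eq_zero_iff.2 ⟨h0.le, h1⟩] at hj
      · exact ⟨j, rfl⟩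
  have hreindex : ∑' m, F (jumpIndex ρ m) = ∑' m, lam ^ jumpIndex ρ m * mu ^ m := by
    congr 1 with m
    obtain ⟨hm, hm1⟩ := floor_mul_jumpIndex h0 h1.le m
    simp [F, hm, hm1]
  rw [hshift, ← hreindex, (jumpIndex_injective h0 h1.le).tsum_eq]
  intro j hj
  refine ⟨_, jumpIndex_floor_of_floor_ne h0 fun h ↦ hj ?_⟩
  simp [F, h]

section sigma

variable {lam mu : ℝ}

lemma rFn_le_one (hlam0 : 0 < lam) (hlam1 : lam < 1) (hmu : 0 < mu) : rFn lam mu ≤ 1 := by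
  unfold rFn
  split_ifs with hlm
  · exact le_rfl
  · have hmu1 : 1 < mu := by nlinarith
    rw [div_le_one (Real.log_pos hmu1), neg_le_iff_add_nonneg', ← Real.log_mul hlam0.ne' hmu.ne']
    exact Real.log_nonneg (not_lt.1 hlm)

lemma rpow_inv_mul_lt_one_of_lt_rFn (hlam0 : 0 < lam) (hlam1 : lam < 1) (hmu : 0 < mu)
    {ρ : ℝ} (h0 : 0 < ρ) (hr : ρ < rFn lam mu) : lam ^ ρ⁻¹ * mu < 1 := by
  unfold rFn at hr
  split_ifs at hr with hlm
  · have : lam ^ ρ⁻¹ ≤ lam := by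
      simpa using Real.rpow_le_rpow_of_exponent_ge hlam0 hlam1.le (one_le_inv₀ h0 |>.2 hr.le)
    nlinarith
  · have hlogmu : 0 < Real.log mu := Real.log_pos (by nlinarith)
    rw [← Real.log_neg_iff (by positivity), Real.log_mul (by positivity) hmu.ne',
      Real.log_rpow hlam0, inv_mul_eq_div, div_add' _ _ _ h0.ne', div_neg_iff]
    rw [lt_div_iff₀ hlogmu] at hr
    right
    constructor <;> linarith

variable (hlam0 : 0 < lam) (hlam1 : lam < 1) (hmu : 0 < mu)
include hlam0 hlam1 hmu

lemma summable_of_mem_Ioo_rFn {ρ : ℝ} (hρ : ρ ∈ Ioo 0 (rFn lam mu)) :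
    Summable fun m ↦ lam ^ jumpIndex ρ m * mu ^ m :=
  summable_pow_jumpIndex_mul_pow hlam0 hlam1 hmu hρ.1
    (rpow_inv_mul_lt_one_of_lt_rFn hlam0 hlam1 hmu hρ.1 hρ.2)

lemma sigmaFn_eq_of_mem_Ioo_rFn {ρ : ℝ} (hρ : ρ ∈ Ioo 0 (rFn lam mu)) :
    sigmaFn lam mu ρ = ∑' m, lam ^ jumpIndex ρ m * mu ^ m :=
  sigmaFn_eq_tsum_jumpIndex lam mu hρ.1 (hρ.2.trans_le (rFn_le_one hlam0 hlam1 hmu))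

lemma sigmaFn_pos {ρ : ℝ} (hρ : ρ ∈ Ioo 0 (rFn lam mu)) : 0 < sigmaFn lam mu ρ := by
  rw [sigmaFn_eq_of_mem_Ioo_rFn hlam0 hlam1 hmu hρ]
  exact (summable_of_mem_Ioo_rFn hlam0 hlam1 hmu hρ).tsum_pos (fun _ ↦ by positivity) 0
    (by positivity)

lemma sigmaFn_strictMonoOn : StrictMonoOn (sigmaFn lam mu) (Ioo 0 (rFn lam mu)) := by
  intro ρ₁ h₁ ρ₂ h₂ h
  rw [sigmaFn_eq_of_mem_Ioo_rFn hlam0 hlam1 hmu h₁, sigmaFn_eq_of_mem_Ioo_rFn hlam0 hlam1 hmu h₂]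
  obtain ⟨n, hn⟩ := exists_jumpIndex_lt h₁.1 h
  exact tsum_pow_mul_pow_lt_of_lt hlam0 hlam1 hmu (jumpIndex_le_jumpIndex h₁.1 h.le) hn
    (summable_of_mem_Ioo_rFn hlam0 hlam1 hmu h₂)

/-- The bound is the value of the series in the limit `ρ → 1⁻`, where `jumpIndex ρ m = m + 1`. -/
lemma sigmaFn_lt_of_mul_lt_one (hlm : lam * mu < 1) {ρ : ℝ} (hρ : ρ ∈ Ioo 0 (rFn lam mu)) :
    sigmaFn lam mu ρ < lam / (1 - lam * mu) := by
  have hρ1 : ρ < 1 := hρ.2.trans_le (rFn_le_one hlam0 hlam1 hmu)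
  -- comparing with `ρ' = (ρ + 1) / 2 < 1` gives an `n` with `n + 1 < jumpIndex ρ n`
  obtain ⟨n, hn⟩ := exists_jumpIndex_lt hρ.1 (left_lt_add_div_two.2 hρ1)
  have hgeom : HasSum (fun m : ℕ ↦ lam ^ (m + 1) * mu ^ m) (lam / (1 - lam * mu)) := by
    have hterm : (fun m : ℕ ↦ lam ^ (m + 1) * mu ^ m) = fun m ↦ (lam * mu) ^ m * lam := by
      ext m
      ring
    rw [hterm, div_eq_inv_mul]
    exact (hasSum_geometric_of_lt_one (by positivity) hlm).mul_right lam
  rw [sigmaFn_eq_of_mem_Ioo_rFn hlam0 hlam1 hmu hρ, ← hgeom.tsum_eq]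
  exact tsum_pow_mul_pow_lt_of_lt (b := (· + 1)) hlam0 hlam1 hmu (lt_jumpIndex hρ.1 hρ1)
    (Nat.lt_of_le_of_lt (lt_jumpIndex (by linarith [hρ.1]) (add_div_two_lt_right.2 hρ1) n) hn)
    hgeom.summable

lemma one_add_mul_sigmaFn_pos {ρ : ℝ} (hρ : ρ ∈ Ioo 0 (rFn lam mu)) :
    0 < 1 + (mu - 1) * sigmaFn lam mu ρ := by
  have hσ := sigmaFn_pos hlam0 hlam1 hmu hρ
  rcases le_or_gt 1 mu with hmu1 | hmu1
  · nlinarith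
  · have hlm : lam * mu < 1 := by nlinarith
    have := sigmaFn_lt_of_mul_lt_one hlam0 hlam1 hmu hlm hρ
    rw [lt_div_iff₀ (by linarith)] at this
    nlinarith

end sigma

noncomputable def deltaOfSigma (lam mu s : ℝ) : ℝ :=
  (1 - lam) * (1 + mu * s) / (1 + (mu - 1) * s)

section deltaOfSigma

variable {lam mu : ℝ}

lemma deltaOfSigma_zero (lam mu : ℝ) : deltaOfSigma lam mu 0 = 1 - lam := by
  simp [deltaOfSigma]

lemma deltaOfSigma_strictMonoOn (hlam1 : lam < 1) :
    StrictMonoOn (deltaOfSigma lam mu) {s | 0 < 1 + (mu - 1) * s} := by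
  intro s₁ h₁ s₂ h₂ h
  rw [deltaOfSigma, deltaOfSigma, div_lt_div_iff₀ h₁ h₂]
  nlinarith [mul_pos (sub_pos.2 hlam1) (sub_pos.2 h)]

lemma one_add_mul_div_pos (hlam1 : lam < 1) (hlm : lam * mu < 1) :
    0 < 1 + (mu - 1) * (lam / (1 - lam * mu)) := by
  have hc : 0 < 1 - lam * mu := by linarith
  rw [← mul_div_assoc, one_add_div hc.ne']
  exact div_pos (by linarith) hc

lemma deltaOfSigma_div_eq_one (hlam1 : lam < 1) (hlm : lam * mu < 1) :
    deltaOfSigma lam mu (lam / (1 - lam * mu)) = 1 := by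
  have hc : 1 - lam * mu ≠ 0 := by linarith
  rw [deltaOfSigma, div_eq_one_iff_eq (one_add_mul_div_pos hlam1 hlm).ne', ← mul_div_assoc,
    ← mul_div_assoc, one_add_div hc, one_add_div hc, mul_div_assoc', div_left_inj' hc]
  ring

lemma deltaOfSigma_lt_of_one_lt (hlam1 : lam < 1) (hmu1 : 1 < mu) {s : ℝ} (hs : 0 ≤ s) :
    deltaOfSigma lam mu s < (mu - lam * mu) / (mu - 1) := by
  rw [deltaOfSigma, div_lt_div_iff₀ (by nlinarith) (by linarith)]
  nlinarith

end deltaOfSigma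

theorem stmt6 (lam mu : ℝ) (hlam0 : 0 < lam) (hlam1 : lam < 1) (hmu : 0 < mu) :
    StrictMonoOn (deltaFn lam mu) (Set.Ioo 0 (rFn lam mu)) ∧
    Set.MapsTo (deltaFn lam mu) (Set.Ioo 0 (rFn lam mu)) (Set.Ioo (1 - lam) (dFn lam mu)) := by
  have hmono := deltaOfSigma_strictMonoOn (mu := mu) hlam1
  have hD : MapsTo (sigmaFn lam mu) (Ioo 0 (rFn lam mu)) {s | 0 < 1 + (mu - 1) * s} :=
    fun ρ hρ ↦ one_add_mul_sigmaFn_pos hlam0 hlam1 hmu hρ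
  refine ⟨hmono.comp (sigmaFn_strictMonoOn hlam0 hlam1 hmu) hD, fun ρ hρ ↦ ⟨?_, ?_⟩⟩
  · rw [← deltaOfSigma_zero lam mu]
    exact hmono (by simp) (hD hρ) (sigmaFn_pos hlam0 hlam1 hmu hρ)
  · unfold dFn
    split_ifs with hlm
    · rw [← deltaOfSigma_div_eq_one hlam1 hlm]
      exact hmono (hD hρ) (one_add_mul_div_pos hlam1 hlm)
        (sigmaFn_lt_of_mul_lt_one hlam0 hlam1 hmu hlm hρ)
    · exact deltaOfSigma_lt_of_one_lt hlam1 (by nlinarith)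
        (sigmaFn_pos hlam0 hlam1 hmu hρ).le
end

section
/- For 0 < λ < 1, μ > 0, 0 < ρ < r_{λ,μ} and any real x > −1: Σ_{k≥0} (⌈(k+1)ρ+x⌉ − ⌈kρ+x⌉) λ^k μ^{⌈kρ+x⌉} = −(1−μ^{⌈x⌉})/((1−μ)λ) + ((1−λ)/λ)·Φ_ρ(λ,μ,x), where the ratio (1−μ^{⌈x⌉})/(1−μ) is interpreted as ⌈x⌉ when μ = 1. -/
/-!
Write `n_k = ⌈kρ + x⌉` and `a_k = 1 + μ + ⋯ + μ^(n_k - 1)`, so that `Φ_ρ(λ,μ,x) = Σ λ^k a_k`.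
Since `0 < ρ < r_{λ,μ} ≤ 1`, the jump `n_{k+1} - n_k` is `0` or `1`, hence the `k`-th term of
the series is exactly `λ^k (a_{k+1} - a_k)`. Summation by parts turns `Σ λ^k (a_{k+1} - a_k)`
into `-a_0/λ + ((1-λ)/λ) Σ λ^k a_k`, and `a_0` is the geometric sum up to `⌈x⌉`. Summability
of `Σ λ^k a_k` holds because `a_k ≤ n_k max(μ,1)^{n_k}` grows at most like `k max(μ,1)^{kρ}`,
and `ρ < r_{λ,μ}` gives `λ max(μ,1)^ρ < 1`.
-/

/-- The Hecke–Mahler series Φ_ρ(λ,μ,x) = Σ_{k≥0} Σ_{0≤l<kρ+x} λ^k μ^l. -/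
noncomputable def PhiHM (rho lam mu x : ℝ) : ℝ :=
  ∑' k : ℕ, ∑ l ∈ Finset.range (⌈(k : ℝ) * rho + x⌉.toNat), lam ^ k * mu ^ l

open Finset Real

/-- The exponent `r_{λ,μ}` of the paper. -/
noncomputable def critExponent (lam mu : ℝ) : ℝ :=
  if lam * mu < 1 then 1 else -log lam / log mu

noncomputable def ceilGeomSum (rho mu x : ℝ) (k : ℕ) : ℝ :=
  ∑ l ∈ range ⌈(k : ℝ) * rho + x⌉.toNat, mu ^ l

theorem critExponent_le_one {lam mu : ℝ} (hlam0 : 0 < lam) (hlam1 : lam < 1) (hmu : 0 < mu) :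
    critExponent lam mu ≤ 1 := by
  unfold critExponent
  split_ifs with h
  · rfl
  · have hmu1 : 1 < mu := by nlinarith
    rw [div_le_one (log_pos hmu1), neg_le, ← sub_nonneg, sub_neg_eq_add,
      ← log_mul hlam0.ne' hmu.ne']
    exact log_nonneg (by linarith)

theorem mul_max_one_rpow_lt_one {lam mu rho : ℝ} (hlam0 : 0 < lam) (hlam1 : lam < 1)
    (hmu : 0 < mu) (hrho : rho < critExponent lam mu) :
    lam * max mu 1 ^ rho < 1 := by
  rcases le_or_gt mu 1 with hle | hgt
  · rwa [max_eq_right hle, one_rpow, mul_one]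
  rw [max_eq_left hgt.le]
  unfold critExponent at hrho
  split_ifs at hrho with h
  · calc lam * mu ^ rho ≤ lam * mu ^ (1 : ℝ) := by gcongr; exact hgt.le
      _ < 1 := by rwa [rpow_one]
  · rw [lt_div_iff₀ (log_pos hgt)] at hrho
    rw [← log_neg_iff (by positivity), log_mul hlam0.ne' (by positivity), log_rpow hmu]
    linarith

theorem geom_sum_le_card_mul_max_pow {mu : ℝ} (hmu : 0 ≤ mu) (n : ℕ) :
    ∑ l ∈ range n, mu ^ l ≤ n * max mu 1 ^ n := by
  calc ∑ l ∈ range n, mu ^ l ≤ ∑ _l ∈ range n, max mu 1 ^ n := by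
        refine sum_le_sum fun l hl ↦ ?_
        calc mu ^ l ≤ max mu 1 ^ l := pow_le_pow_left₀ hmu (le_max_left _ _) l
          _ ≤ max mu 1 ^ n := pow_le_pow_right₀ (le_max_right _ _) (mem_range.mp hl).le
    _ = n * max mu 1 ^ n := by simp

theorem ceilGeomSum_nonneg {mu : ℝ} (hmu : 0 ≤ mu) (rho x : ℝ) (k : ℕ) :
    0 ≤ ceilGeomSum rho mu x k :=
  sum_nonneg fun _ _ ↦ by positivity

theorem pow_mul_ceilGeomSum_le {lam mu rho : ℝ} (hlam : 0 ≤ lam) (hmu : 0 ≤ mu) (hrho : 0 ≤ rho)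
    (x : ℝ) (k : ℕ) :
    lam ^ k * ceilGeomSum rho mu x k ≤
      max mu 1 ^ (|x| + 1) * ((k * rho + (|x| + 1)) * (lam * max mu 1 ^ rho) ^ k) := by
  set M := max mu 1
  set C := |x| + 1
  set n := ⌈(k : ℝ) * rho + x⌉.toNat
  have hn : (n : ℝ) ≤ k * rho + C := by
    have hceil := Int.ceil_lt_add_one ((k : ℝ) * rho + x)
    have hx := le_abs_self x
    have hk : (0 : ℝ) ≤ k * rho := by positivity
    rcases le_total ⌈(k : ℝ) * rho + x⌉ 0 with h | h
    · simp only [n, Int.toNat_of_nonpos h, Nat.cast_zero]; positivity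
    · have hn : (n : ℝ) = ⌈(k : ℝ) * rho + x⌉ := by exact_mod_cast Int.toNat_of_nonneg h
      linarith
  have hMn : M ^ n ≤ M ^ C * (M ^ rho) ^ k := by
    calc M ^ n = M ^ (n : ℝ) := (rpow_natCast M n).symm
      _ ≤ M ^ (k * rho + C) := rpow_le_rpow_of_exponent_le (le_max_right _ _) hn
      _ = M ^ C * (M ^ rho) ^ k := by
          rw [rpow_add (by positivity), ← rpow_natCast, ← rpow_mul (by positivity), mul_comm rho,
            mul_comm]
  calc lam ^ k * ceilGeomSum rho mu x k ≤ lam ^ k * (n * M ^ n) :=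
        mul_le_mul_of_nonneg_left (geom_sum_le_card_mul_max_pow hmu n) (by positivity)
    _ ≤ lam ^ k * ((k * rho + C) * (M ^ C * (M ^ rho) ^ k)) := by gcongr
    _ = M ^ C * ((k * rho + C) * (lam * M ^ rho) ^ k) := by ring

theorem summable_pow_mul_ceilGeomSum {lam mu rho : ℝ} (hlam : 0 ≤ lam) (hmu : 0 ≤ mu)
    (hrho : 0 ≤ rho) (hr : lam * max mu 1 ^ rho < 1) (x : ℝ) :
    Summable fun k ↦ lam ^ k * ceilGeomSum rho mu x k := by
  refine .of_nonneg_of_le (fun k ↦ mul_nonneg (by positivity) (ceilGeomSum_nonneg hmu rho x k))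
    (pow_mul_ceilGeomSum_le hlam hmu hrho x) (.mul_left _ ?_)
  set r := lam * max mu 1 ^ rho
  have hr0 : 0 ≤ r := by positivity
  have hlin : Summable fun k : ℕ ↦ (k : ℝ) * r ^ k := by
    simpa using summable_pow_mul_geometric_of_norm_lt_one 1 (by rwa [norm_of_nonneg hr0])
  refine ((hlin.mul_left rho).add ((summable_geometric_of_lt_one hr0 hr).mul_left (|x| + 1))).congr
    fun k ↦ ?_
  ring

theorem Int.ceil_add_eq_or_eq_add_one {α : Type*} [Ring α] [LinearOrder α]
    [IsStrictOrderedRing α] [FloorRing α] (y : α) {ρ : α} (h0 : 0 ≤ ρ) (h1 : ρ ≤ 1) :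
    ⌈y + ρ⌉ = ⌈y⌉ ∨ ⌈y + ρ⌉ = ⌈y⌉ + 1 := by
  have hle : ⌈y⌉ ≤ ⌈y + ρ⌉ := Int.ceil_le_ceil (le_add_of_nonneg_right h0)
  have hge : ⌈y + ρ⌉ ≤ ⌈y⌉ + 1 := by
    rw [← Int.ceil_add_one]; exact Int.ceil_le_ceil (by gcongr)
  omega

theorem int_sub_mul_zpow_eq_geom_sum_sub {K : Type*} [Field K] (μ : K) {c d : ℤ} (hc : 0 ≤ c)
    (hd : d = c ∨ d = c + 1) :
    ((d - c : ℤ) : K) * μ ^ c = ∑ l ∈ range d.toNat, μ ^ l - ∑ l ∈ range c.toNat, μ ^ l := by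
  lift c to ℕ using hc
  rcases hd with rfl | rfl
  · simp
  · rw [show (c : ℤ) + 1 = ((c + 1 : ℕ) : ℤ) by push_cast; ring]
    simp [sum_range_succ]

theorem ceil_sub_mul_zpow_eq_ceilGeomSum_sub (mu : ℝ) {rho x : ℝ} (hrho0 : 0 ≤ rho)
    (hrho1 : rho ≤ 1) (hx : -1 < x) (k : ℕ) :
    ((⌈((k : ℝ) + 1) * rho + x⌉ - ⌈(k : ℝ) * rho + x⌉ : ℤ) : ℝ) * mu ^ ⌈(k : ℝ) * rho + x⌉ =
      ceilGeomSum rho mu x (k + 1) - ceilGeomSum rho mu x k := by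
  have hshift : ((k : ℝ) + 1) * rho + x = (k * rho + x) + rho := by ring
  simp only [ceilGeomSum, Nat.cast_succ, hshift]
  exact int_sub_mul_zpow_eq_geom_sum_sub mu
    (Int.ceil_nonneg_of_neg_one_lt (by nlinarith [(k.cast_nonneg : (0 : ℝ) ≤ k)]))
    (Int.ceil_add_eq_or_eq_add_one (k * rho + x) hrho0 hrho1)

theorem geom_sum_range_toNat {K : Type*} [Field K] [DecidableEq K] (μ : K) {c : ℤ}
    (hc : 0 ≤ c) :
    ∑ l ∈ range c.toNat, μ ^ l = if μ = 1 then (c : K) else (1 - μ ^ c) / (1 - μ) := by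
  lift c to ℕ using hc
  split_ifs with h
  · simp [h]
  · rw [Int.toNat_natCast, geom_sum_eq h, zpow_natCast, ← neg_div_neg_eq]
    ring_nf

theorem tsum_pow_mul_sub_eq {K : Type*} [Field K] [TopologicalSpace K] [IsTopologicalRing K]
    [T2Space K] {lam : K} (hlam : lam ≠ 0) {a : ℕ → K}
    (ha : Summable fun k ↦ lam ^ k * a k) :
    ∑' k, lam ^ k * (a (k + 1) - a k) = -a 0 / lam + (1 - lam) / lam * ∑' k, lam ^ k * a k := by
  have hshift : ∀ k, lam ^ k * a (k + 1) = lam⁻¹ * (lam ^ (k + 1) * a (k + 1)) := fun k ↦ by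
    rw [pow_succ]; field_simp
  have hsucc : Summable fun k ↦ lam ^ k * a (k + 1) := by
    simp_rw [hshift]; exact ((summable_nat_add_iff 1).mpr ha).mul_left _
  simp_rw [mul_sub, hsucc.tsum_sub ha, hshift, tsum_mul_left]
  rw [ha.tsum_eq_zero_add]
  field_simp
  ring

theorem stmt8 (lam mu rho x : ℝ) (hlam0 : 0 < lam) (hlam1 : lam < 1) (hmu : 0 < mu)
    (hrho0 : 0 < rho)
    (hrho1 : rho < if lam * mu < 1 then 1 else -Real.log lam / Real.log mu)
    (hx : -1 < x) :
    ∑' k : ℕ, ((⌈((k : ℝ) + 1) * rho + x⌉ - ⌈(k : ℝ) * rho + x⌉ : ℤ) : ℝ) *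
        lam ^ k * mu ^ ⌈(k : ℝ) * rho + x⌉ =
      -(if mu = 1 then (⌈x⌉ : ℝ) else (1 - mu ^ ⌈x⌉) / (1 - mu)) / lam +
        (1 - lam) / lam * PhiHM rho lam mu x := by
  have hrho_le : rho ≤ 1 := (hrho1.trans_le (critExponent_le_one hlam0 hlam1 hmu)).le
  have hterm : ∀ k : ℕ,
      ((⌈((k : ℝ) + 1) * rho + x⌉ - ⌈(k : ℝ) * rho + x⌉ : ℤ) : ℝ) * lam ^ k *
          mu ^ ⌈(k : ℝ) * rho + x⌉ =
        lam ^ k * (ceilGeomSum rho mu x (k + 1) - ceilGeomSum rho mu x k) := fun k ↦ by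
    rw [mul_right_comm, ceil_sub_mul_zpow_eq_ceilGeomSum_sub mu hrho0.le hrho_le hx, mul_comm]
  have hPhi : PhiHM rho lam mu x = ∑' k, lam ^ k * ceilGeomSum rho mu x k :=
    tsum_congr fun k ↦ (mul_sum _ _ _).symm
  have ha0 : ceilGeomSum rho mu x 0 =
      if mu = 1 then (⌈x⌉ : ℝ) else (1 - mu ^ ⌈x⌉) / (1 - mu) := by
    simpa [ceilGeomSum] using geom_sum_range_toNat mu (Int.ceil_nonneg_of_neg_one_lt hx)
  have hsum := summable_pow_mul_ceilGeomSum hlam0.le hmu.le hrho0.le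
    (mul_max_one_rpow_lt_one hlam0 hlam1 hmu hrho1) x
  rw [tsum_congr hterm, tsum_pow_mul_sub_eq hlam0.ne' hsum, ha0, hPhi]
end

section
/- Let 0 < λ < 1, μ > 0, 0 < ρ < r_{λ,μ}, and δ real. Then for all y, φ_{λ,μ,δ,ρ}(y) = ⌊y⌋ + δ/(1−λ) − ((δ − μ(λ+δ−1))/λ)·Φ_ρ(λ,μ,−{y}), where {y} denotes the fractional part of y. -/
/-- The conjugation function φ_{λ,μ,δ,ρ}. -/
noncomputable def phiFn (lam mu del rho y : ℝ) : ℝ :=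
  (⌊y⌋ : ℝ) + (1 - del) / lam +
    ∑' k : ℕ, lam ^ k * mu ^ (⌊y⌋ - ⌊y - (k : ℝ) * rho⌋) *
      ((lam + del - 1) / lam + ((⌊y - ((k : ℝ) + 1) * rho⌋ : ℝ) - (⌊y - (k : ℝ) * rho⌋ : ℝ)))

open Finset

lemma floor_sub_eq_floor_sub_ceil_sub_fract (y t : ℝ) :
    ⌊y - t⌋ = ⌊y⌋ - ⌈t - Int.fract y⌉ := by
  have : y - t = ((⌊y⌋ : ℤ) : ℝ) + -(t - Int.fract y) := by rw [Int.fract]; ring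
  rw [this, Int.floor_intCast_add, Int.floor_neg]
  ring

lemma lt_one_and_mul_max_rpow_lt_one {lam mu rho : ℝ} (hlam0 : 0 < lam) (hlam1 : lam < 1)
    (hmu : 0 < mu) (hrho : rho < if lam * mu < 1 then 1 else -Real.log lam / Real.log mu) :
    rho < 1 ∧ lam * max 1 mu ^ rho < 1 := by
  rcases le_or_gt mu 1 with hmu1 | hmu1
  · have hprod : lam * mu < 1 := by nlinarith
    rw [if_pos hprod] at hrho
    rw [max_eq_left hmu1, Real.one_rpow, mul_one]
    exact ⟨hrho, hlam1⟩
  · have hlogmu : 0 < Real.log mu := Real.log_pos hmu1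
    have hlogprod : Real.log (lam * mu) = Real.log lam + Real.log mu :=
      Real.log_mul hlam0.ne' hmu.ne'
    suffices h : rho < 1 ∧ Real.log lam + rho * Real.log mu < 0 by
      refine ⟨h.1, ?_⟩
      rw [max_eq_right hmu1.le, ← Real.log_neg_iff (by positivity),
        Real.log_mul hlam0.ne' (by positivity), Real.log_rpow hmu]
      exact h.2
    split_ifs at hrho with hprod
    · have : Real.log (lam * mu) < 0 := Real.log_neg (by positivity) hprod
      exact ⟨hrho, by nlinarith⟩
    · have hlt : rho * Real.log mu < -Real.log lam := (lt_div_iff₀ hlogmu).mp hrho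
      have : 0 ≤ Real.log (lam * mu) := Real.log_nonneg (not_lt.mp hprod)
      exact ⟨by nlinarith, by linarith⟩

noncomputable def ceilSeq (rho x : ℝ) (k : ℕ) : ℕ := ⌈(k : ℝ) * rho + x⌉.toNat

section ceilSeq

variable {rho x : ℝ}

lemma ceilSeq_cast (hrho : 0 ≤ rho) (hx : -1 < x) (k : ℕ) :
    (ceilSeq rho x k : ℤ) = ⌈(k : ℝ) * rho + x⌉ := by
  have : (-1 : ℤ) < ⌈(k : ℝ) * rho + x⌉ := by
    rw [Int.lt_ceil]
    push_cast
    nlinarith [(k.cast_nonneg : (0 : ℝ) ≤ k)]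
  exact Int.toNat_of_nonneg (by omega)

lemma ceilSeq_zero (hx : x ≤ 0) : ceilSeq rho x 0 = 0 := by
  simp only [ceilSeq, CharP.cast_eq_zero, zero_mul, zero_add, Int.toNat_eq_zero]
  exact Int.ceil_le.mpr (by simpa using hx)

lemma ceilSeq_succ (hrho0 : 0 ≤ rho) (hrho1 : rho ≤ 1) (k : ℕ) :
    ceilSeq rho x (k + 1) = ceilSeq rho x k ∨ ceilSeq rho x (k + 1) = ceilSeq rho x k + 1 := by
  have hmono : ⌈(k : ℝ) * rho + x⌉ ≤ ⌈((k + 1 : ℕ) : ℝ) * rho + x⌉ :=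
    Int.ceil_le_ceil (by push_cast; nlinarith)
  have hstep : ⌈((k + 1 : ℕ) : ℝ) * rho + x⌉ ≤ ⌈(k : ℝ) * rho + x⌉ + 1 := by
    rw [Int.ceil_le]
    push_cast
    linarith [Int.le_ceil ((k : ℝ) * rho + x)]
  simp only [ceilSeq]
  omega

lemma ceilSeq_le (hrho : 0 ≤ rho) (hx : -1 < x) (hx0 : x ≤ 0) (k : ℕ) :
    (ceilSeq rho x k : ℝ) ≤ k * rho + 1 := by
  have h := Int.ceil_lt_add_one ((k : ℝ) * rho + x)
  rw [← ceilSeq_cast hrho hx] at h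
  push_cast at h
  linarith

end ceilSeq

section GeomSum

variable {mu : ℝ}

lemma pow_mul_sub_eq_geom_sum_sub {m n : ℕ} (h : m = n ∨ m = n + 1) :
    mu ^ n * ((m : ℝ) - n) = ∑ l ∈ range m, mu ^ l - ∑ l ∈ range n, mu ^ l := by
  rcases h with rfl | rfl <;> simp [sum_range_succ]

lemma pow_eq_one_add_mul_geom_sum (n : ℕ) : mu ^ n = 1 + (mu - 1) * ∑ l ∈ range n, mu ^ l := by
  linear_combination (geom_sum_mul mu n).symm

lemma geom_sum_le_mul_max_pow (hmu : 0 ≤ mu) (n : ℕ) :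
    ∑ l ∈ range n, mu ^ l ≤ n * max 1 mu ^ n := by
  have hterm : ∀ l ∈ range n, mu ^ l ≤ max 1 mu ^ n := fun l hl =>
    (pow_le_pow_left₀ hmu (le_max_right 1 mu) l).trans
      (pow_le_pow_right₀ (le_max_left 1 mu) (mem_range.mp hl).le)
  simpa using sum_le_card_nsmul _ _ _ hterm

end GeomSum

lemma pow_le_mul_rpow_pow {M rho : ℝ} (hM : 1 ≤ M) {n k : ℕ} (h : (n : ℝ) ≤ k * rho + 1) :
    M ^ n ≤ M * (M ^ rho) ^ k := by
  have hM0 : 0 < M := one_pos.trans_le hM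
  calc M ^ n = M ^ (n : ℝ) := (Real.rpow_natCast M n).symm
    _ ≤ M ^ ((k : ℝ) * rho + 1) := Real.rpow_le_rpow_of_exponent_le hM h
    _ = M * (M ^ rho) ^ k := by
      rw [Real.rpow_add hM0, Real.rpow_one, mul_comm (k : ℝ) rho, Real.rpow_mul hM0.le,
        Real.rpow_natCast, mul_comm]

section UnitSteps

variable {lam mu : ℝ} {b : ℕ → ℕ}

lemma summable_pow_mul_geom_sum {rho : ℝ} (hlam : 0 ≤ lam) (hmu : 0 ≤ mu)
    (hr : lam * max 1 mu ^ rho < 1) (hb : ∀ k, (b k : ℝ) ≤ k * rho + 1) :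
    Summable fun k => lam ^ k * ∑ l ∈ range (b k), mu ^ l := by
  set M := max 1 mu
  set r := lam * M ^ rho
  have hr0 : 0 ≤ r := by positivity
  have hbound : ∀ k : ℕ, lam ^ k * ∑ l ∈ range (b k), mu ^ l ≤ M * ((k * rho + 1) * r ^ k) := by
    intro k
    have hb0 : (0 : ℝ) ≤ k * rho + 1 := (b k).cast_nonneg.trans (hb k)
    calc lam ^ k * ∑ l ∈ range (b k), mu ^ l ≤ lam ^ k * (b k * M ^ b k) := by
          gcongr; exact geom_sum_le_mul_max_pow hmu _
      _ ≤ lam ^ k * ((k * rho + 1) * (M * (M ^ rho) ^ k)) := by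
          gcongr
          · exact hb k
          · exact pow_le_mul_rpow_pow (le_max_left 1 mu) (hb k)
      _ = M * ((k * rho + 1) * r ^ k) := by rw [mul_pow]; ring
  have hgeom : Summable fun k : ℕ => M * ((k * rho + 1) * r ^ k) := by
    have hr' : ‖r‖ < 1 := by rwa [Real.norm_eq_abs, abs_of_nonneg hr0]
    refine ((((summable_pow_mul_geometric_of_norm_lt_one 1 hr').mul_left rho).add
      (summable_geometric_of_lt_one hr0 hr)).mul_left M).congr fun k => ?_
    simp only [pow_one]
    ring
  exact hgeom.of_nonneg_of_le (fun k => by positivity) hbound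

variable (hg : Summable fun k => lam ^ k * ∑ l ∈ range (b k), mu ^ l)
include hg

lemma tsum_pow_mul_pow (hlam0 : 0 ≤ lam) (hlam1 : lam < 1) :
    ∑' k, lam ^ k * mu ^ b k =
      (1 - lam)⁻¹ + (mu - 1) * ∑' k, lam ^ k * ∑ l ∈ range (b k), mu ^ l := by
  have hpt : ∀ k, lam ^ k * mu ^ b k = lam ^ k + (mu - 1) * (lam ^ k * ∑ l ∈ range (b k), mu ^ l) :=
    fun k => by rw [pow_eq_one_add_mul_geom_sum (b k)]; ring
  rw [tsum_congr hpt, (summable_geometric_of_lt_one hlam0 hlam1).tsum_add (hg.mul_left _),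
    tsum_geometric_of_lt_one hlam0 hlam1, tsum_mul_left]

lemma tsum_pow_mul_geom_sum_succ (hlam : lam ≠ 0) (hb0 : b 0 = 0) :
    ∑' k, lam ^ k * ∑ l ∈ range (b (k + 1)), mu ^ l =
      (∑' k, lam ^ k * ∑ l ∈ range (b k), mu ^ l) / lam := by
  rw [hg.tsum_eq_zero_add, hb0]
  simp only [range_zero, sum_empty, mul_zero, zero_add, pow_succ, mul_comm _ lam, mul_assoc,
    tsum_mul_left]
  field_simp

lemma tsum_pow_mul_pow_mul_sub_step (c : ℝ) (hlam0 : 0 < lam) (hlam1 : lam < 1) (hb0 : b 0 = 0)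
    (hstep : ∀ k, b (k + 1) = b k ∨ b (k + 1) = b k + 1) :
    ∑' k, lam ^ k * mu ^ b k * (c - ((b (k + 1) : ℝ) - b k)) =
      c * ((1 - lam)⁻¹ + (mu - 1) * ∑' k, lam ^ k * ∑ l ∈ range (b k), mu ^ l) -
        ((∑' k, lam ^ k * ∑ l ∈ range (b k), mu ^ l) / lam -
          ∑' k, lam ^ k * ∑ l ∈ range (b k), mu ^ l) := by
  have hf : Summable fun k => lam ^ k * mu ^ b k := by
    simp_rw [pow_eq_one_add_mul_geom_sum (b _), mul_add, mul_one, mul_left_comm _ (mu - 1)]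
    exact (summable_geometric_of_lt_one hlam0.le hlam1).add (hg.mul_left _)
  have hg' : Summable fun k => lam ^ k * ∑ l ∈ range (b (k + 1)), mu ^ l := by
    refine (((summable_nat_add_iff 1).mpr hg).mul_left lam⁻¹).congr fun k => ?_
    rw [pow_succ]
    field_simp
  have hpt : ∀ k, lam ^ k * mu ^ b k * (c - ((b (k + 1) : ℝ) - b k)) =
      c * (lam ^ k * mu ^ b k) - (lam ^ k * ∑ l ∈ range (b (k + 1)), mu ^ l -
        lam ^ k * ∑ l ∈ range (b k), mu ^ l) := fun k => by
    rw [← mul_sub, ← pow_mul_sub_eq_geom_sum_sub (hstep k)]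
    ring
  rw [tsum_congr hpt, (hf.mul_left c).tsum_sub (hg'.sub hg), tsum_mul_left, hg'.tsum_sub hg,
    tsum_pow_mul_pow hg hlam0.le hlam1, tsum_pow_mul_geom_sum_succ hg hlam0.ne' hb0]

end UnitSteps

lemma PhiHM_eq_tsum_ceilSeq (rho lam mu x : ℝ) :
    PhiHM rho lam mu x = ∑' k, lam ^ k * ∑ l ∈ range (ceilSeq rho x k), mu ^ l := by
  simp only [PhiHM, ceilSeq, mul_sum]

lemma phiFn_eq_tsum_ceilSeq {rho : ℝ} (lam mu del : ℝ) (hrho : 0 ≤ rho) (y : ℝ) :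
    phiFn lam mu del rho y = ⌊y⌋ + (1 - del) / lam +
      ∑' k, lam ^ k * mu ^ ceilSeq rho (-Int.fract y) k *
        ((lam + del - 1) / lam -
          ((ceilSeq rho (-Int.fract y) (k + 1) : ℝ) - ceilSeq rho (-Int.fract y) k)) := by
  have hx : -1 < -Int.fract y := by linarith [Int.fract_lt_one y]
  have hfloor : ∀ k : ℕ, ⌊y - (k : ℝ) * rho⌋ = ⌊y⌋ - ceilSeq rho (-Int.fract y) k := fun k => by
    rw [floor_sub_eq_floor_sub_ceil_sub_fract, ceilSeq_cast hrho hx, ← sub_eq_add_neg]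
  unfold phiFn
  congr 2 with k
  have hsucc : ((k : ℝ) + 1) = ((k + 1 : ℕ) : ℝ) := by push_cast; rfl
  rw [hsucc, hfloor, hfloor, sub_sub_cancel, zpow_natCast]
  push_cast
  ring

theorem stmt10 (lam mu del rho : ℝ) (hlam0 : 0 < lam) (hlam1 : lam < 1) (hmu : 0 < mu)
    (hrho0 : 0 < rho)
    (hrho1 : rho < if lam * mu < 1 then 1 else -Real.log lam / Real.log mu) :
    ∀ y : ℝ, phiFn lam mu del rho y =
      (⌊y⌋ : ℝ) + del / (1 - lam) -
        (del - mu * (lam + del - 1)) / lam * PhiHM rho lam mu (-(Int.fract y)) := by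
  intro y
  obtain ⟨hrho_lt_one, hr⟩ := lt_one_and_mul_max_rpow_lt_one hlam0 hlam1 hmu hrho1
  have hx : -1 < -Int.fract y := by linarith [Int.fract_lt_one y]
  have hx0 : -Int.fract y ≤ 0 := by linarith [Int.fract_nonneg y]
  have hg := summable_pow_mul_geom_sum hlam0.le hmu.le hr (ceilSeq_le hrho0.le hx hx0)
  rw [phiFn_eq_tsum_ceilSeq lam mu del hrho0.le,
    tsum_pow_mul_pow_mul_sub_step hg _ hlam0 hlam1 (ceilSeq_zero hx0)
      (ceilSeq_succ hrho0.le hrho_lt_one.le),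
    PhiHM_eq_tsum_ceilSeq]
  have h1lam : (1 : ℝ) - lam ≠ 0 := by linarith
  field_simp
  ring
end

section
/- Let p, q be coprime positive integers with 0 < p/q < r_{λ,μ}. Then Φ_{p/q}(λ,μ,0) = (λ/(1−λ))·(1 + μσ⁻), where σ⁻ = (S + λ^q μ^{p−1})/(1 − λ^q μ^p) and S = Σ_{k=1}^{q−2} (⌊(k+1)p/q⌋ − ⌊kp/q⌋) λ^k μ^{⌊kp/q⌋}. -/
open Finset

/-- The paper's `r_{λ,μ}`. -/
noncomputable def heckeMahlerBound (lam mu : ℝ) : ℝ :=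
  if lam * mu < 1 then 1 else -Real.log lam / Real.log mu

section Series

variable {K : Type*} [NormedField K]

theorem hasSum_ite_le_pow {x : K} (hx : ‖x‖ < 1) (N : ℕ) :
    HasSum (fun k => if N ≤ k then x ^ k else 0) (x ^ N * (1 - x)⁻¹) := by
  rw [← hasSum_nat_add_iff' N, sum_eq_zero fun i hi => if_neg (by simpa using hi), sub_zero]
  simpa [pow_add, mul_comm] using (hasSum_geometric_of_norm_lt_one hx).mul_left (x ^ N)

theorem hasSum_of_add_period_eq_mul [CompleteSpace K] {g : ℕ → K} {p : ℕ} {r : K} (hp : 0 < p)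
    (hr : ‖r‖ < 1) (hg : ∀ l, g (l + p) = r * g l) :
    HasSum g ((∑ i ∈ range p, g i) * (1 - r)⁻¹) := by
  have : NeZero p := ⟨hp.ne'⟩
  have hblock : ∀ j i, g (j * p + i) = r ^ j * g i := by
    intro j i
    induction j with
    | zero => simp
    | succ j ih => rw [add_mul, one_mul, add_right_comm, hg, ih, pow_succ', mul_assoc]
  have hnorm : Summable fun j => ‖r ^ j‖ := by
    simpa only [norm_pow] using summable_geometric_of_lt_one (norm_nonneg r) hr
  have hsum : Summable fun x : ℕ × Fin p => r ^ x.1 * g x.2 :=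
    summable_mul_of_summable_norm (f := fun j => r ^ j) (g := fun i : Fin p => g i) hnorm
      Summable.of_finite
  have hprod : HasSum (fun x : ℕ × Fin p => r ^ x.1 * g x.2) ((1 - r)⁻¹ * ∑ i : Fin p, g i) :=
    (hasSum_geometric_of_norm_lt_one hr).mul (g := fun i : Fin p => g i) (hasSum_fintype _) hsum
  rw [← (Nat.divModEquiv p).symm.hasSum_iff, mul_comm, ← Fin.sum_univ_eq_sum_range]
  convert hprod using 1
  ext ⟨j, i⟩
  exact hblock j i

end Series

theorem hasSum_rows_of_hasSum_columns {β γ : Type*} {F : β → γ → ℝ} {G : γ → ℝ} {R : β → ℝ}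
    {s : ℝ} (hF : ∀ k l, 0 ≤ F k l) (hcol : ∀ l, HasSum (fun k => F k l) (G l))
    (hG : HasSum G s) (hrow : ∀ k, HasSum (F k) (R k)) : HasSum R s := by
  have hsum : Summable fun x : γ × β => F x.2 x.1 :=
    (summable_prod_of_nonneg fun x => hF x.2 x.1).2
      ⟨fun l => (hcol l).summable, by simpa only [(hcol _).tsum_eq] using hG.summable⟩
  have htotal : HasSum (fun x : β × γ => F x.1 x.2) s := by
    rw [← (Equiv.prodComm γ β).hasSum_iff, hG.unique (hsum.hasSum.prod_fiberwise hcol)]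
    exact hsum.hasSum
  exact htotal.prod_fiberwise hrow

theorem mem_range_ceil_mul_div_iff {p q : ℕ} (hq : 0 < q) (k l : ℕ) :
    l ∈ range ⌈(k : ℝ) * ((p : ℝ) / q) + 0⌉.toNat ↔ l * q < k * p := by
  rw [mem_range, add_zero, Int.lt_toNat, Int.lt_ceil, mul_div_assoc', lt_div_iff₀ (by positivity)]
  exact_mod_cast Iff.rfl

theorem PhiHM_natCast_div_eq {lam mu : ℝ} {p q : ℕ} (hlam0 : 0 ≤ lam) (hlam1 : lam < 1)
    (hmu : 0 ≤ mu) (hp : 0 < p) (hq : 0 < q) (hr : lam ^ q * mu ^ p < 1) :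
    PhiHM ((p : ℝ) / q) lam mu 0 =
      lam / (1 - lam) * ((∑ i ∈ range p, mu ^ i * lam ^ (i * q / p)) / (1 - lam ^ q * mu ^ p)) := by
  set F : ℕ → ℕ → ℝ := fun k l => if l * q < k * p then lam ^ k * mu ^ l else 0
  set g : ℕ → ℝ := fun l => mu ^ l * lam ^ (l * q / p)
  have hF : ∀ k l, 0 ≤ F k l := fun k l => by positivity
  have hrow : ∀ k,
      HasSum (F k) (∑ l ∈ range ⌈(k : ℝ) * ((p : ℝ) / q) + 0⌉.toNat, lam ^ k * mu ^ l) := by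
    intro k
    have hmem := mem_range_ceil_mul_div_iff (p := p) hq k
    rw [sum_congr rfl fun l hl => (if_pos ((hmem l).1 hl)).symm]
    exact hasSum_sum_of_ne_finset_zero fun l hl => if_neg (mt (hmem l).2 hl)
  have hcol : ∀ l, HasSum (fun k => F k l) (lam * (1 - lam)⁻¹ * g l) := by
    intro l
    have hlam : ‖lam‖ < 1 := by rwa [Real.norm_of_nonneg hlam0]
    have hcol_eq : (fun k => F k l) = fun k => mu ^ l * if l * q / p + 1 ≤ k then lam ^ k else 0 := by
      ext k
      simp only [F, Nat.succ_le_iff, Nat.div_lt_iff_lt_mul hp]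
      split_ifs <;> ring
    rw [hcol_eq, show lam * (1 - lam)⁻¹ * g l = mu ^ l * (lam ^ (l * q / p + 1) * (1 - lam)⁻¹) by
      simp only [g]; ring]
    exact (hasSum_ite_le_pow hlam _).mul_left _
  have hg : HasSum g ((∑ i ∈ range p, g i) * (1 - lam ^ q * mu ^ p)⁻¹) := by
    refine hasSum_of_add_period_eq_mul hp (by rwa [Real.norm_of_nonneg (by positivity)]) fun l => ?_
    have hdiv : (l + p) * q / p = l * q / p + q := by
      rw [add_mul, Nat.add_mul_div_left _ _ hp]
    simp only [g, hdiv]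
    ring
  unfold PhiHM
  rw [(hasSum_rows_of_hasSum_columns hF hcol (hg.mul_left _) hrow).tsum_eq]
  simp only [g, div_eq_mul_inv]

theorem mem_Icc_Ioc_div_iff {p q : ℕ} (hp : 0 < p) (hpq : p < q) (hcop : p.Coprime q) (k i : ℕ) :
    k ∈ Icc 1 (q - 2) ∧ i ∈ Ioc (k * p / q) ((k + 1) * p / q) ↔
      k ∈ ({i * q / p} : Finset ℕ) ∧ i ∈ Ico 1 p := by
  have hq : 0 < q := hp.trans hpq
  have hdiv : k = i * q / p ↔ k * p ≤ i * q ∧ i * q < (k + 1) * p := by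
    rw [← Nat.le_div_iff_mul_le hp, ← Nat.div_lt_iff_lt_mul hp]; omega
  simp only [mem_Icc, mem_Ioc, mem_Ico, mem_singleton, Nat.div_lt_iff_lt_mul hq,
    Nat.le_div_iff_mul_le hq, hdiv]
  constructor
  · rintro ⟨⟨hk1, hk2⟩, hlo, hhi⟩
    have hne : i * q ≠ (k + 1) * p := fun h => by
      have := Nat.le_of_dvd k.succ_pos (hcop.symm.dvd_of_dvd_mul_right ⟨i, by rw [← h, mul_comm]⟩)
      omega
    have hi : i < p := by
      by_contra! h
      nlinarith [Nat.mul_le_mul_right p (show k + 2 ≤ q by omega), Nat.mul_le_mul_right q h]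
    exact ⟨⟨hlo.le, lt_of_le_of_ne hhi hne⟩, Nat.pos_of_ne_zero (by rintro rfl; simp at hlo), hi⟩
  · rintro ⟨⟨hlo, hhi⟩, hi1, hi⟩
    have hne : k * p ≠ i * q := fun h => by
      have := Nat.le_of_dvd hi1 (hcop.dvd_of_dvd_mul_right ⟨k, by rw [← h, mul_comm]⟩)
      omega
    refine ⟨⟨Nat.pos_of_ne_zero ?_, ?_⟩, lt_of_le_of_ne hlo hne, hhi.le⟩
    · rintro rfl
      nlinarith
    · by_contra! h
      nlinarith [Nat.mul_le_mul_right p (show q ≤ k + 1 by omega), Nat.mul_le_mul_right q hi]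

theorem add_one_mul_div_eq_or {p q : ℕ} (hpq : p ≤ q) (k : ℕ) :
    (k + 1) * p / q = k * p / q ∨ (k + 1) * p / q = k * p / q + 1 := by
  rcases Nat.eq_zero_or_pos q with rfl | hq
  · simp
  have hle : k * p / q ≤ (k + 1) * p / q := Nat.div_le_div_right (by nlinarith)
  have hge : (k + 1) * p / q ≤ k * p / q + 1 := by
    rw [← Nat.add_div_right _ hq]
    exact Nat.div_le_div_right (by nlinarith)
  omega

theorem sum_Ico_pow_mul_pow_div_eq {R : Type*} [CommRing R] {p q : ℕ} (hp : 0 < p) (hpq : p < q)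
    (hcop : p.Coprime q) (x y : R) :
    ∑ i ∈ Ico 1 p, y ^ i * x ^ (i * q / p) =
      y * ∑ k ∈ Icc 1 (q - 2),
        ((((k + 1) * p / q : ℕ) - (k * p / q : ℕ) : ℤ) : R) * x ^ k * y ^ (k * p / q) := by
  calc ∑ i ∈ Ico 1 p, y ^ i * x ^ (i * q / p)
      = ∑ i ∈ Ico 1 p, ∑ k ∈ {i * q / p}, x ^ k * y ^ i := by
        simp only [sum_singleton, mul_comm]
    _ = ∑ k ∈ Icc 1 (q - 2), ∑ i ∈ Ioc (k * p / q) ((k + 1) * p / q), x ^ k * y ^ i :=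
        (sum_comm' fun k i => mem_Icc_Ioc_div_iff hp hpq hcop k i).symm
    _ = _ := by
        rw [mul_sum]
        refine sum_congr rfl fun k _ => ?_
        rcases add_one_mul_div_eq_or hpq.le k with h | h
        · simp [h]
        · simp only [h, Nat.Ioc_succ_singleton, sum_singleton, Nat.cast_add_one, add_sub_cancel_left,
            Int.cast_one, one_mul, pow_succ]
          ring

theorem floor_natCast_div_natCast_eq {K : Type*} [Field K] [LinearOrder K] [IsStrictOrderedRing K]
    [FloorRing K] (a b : ℕ) : ⌊(a : K) / b⌋ = ((a / b : ℕ) : ℤ) := by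
  rw [Int.floor_div_natCast]; simp

theorem lt_of_div_lt_heckeMahlerBound {lam mu : ℝ} {p q : ℕ} (hlam0 : 0 < lam) (hlam1 : lam < 1)
    (hmu : 0 < mu) (hq : 0 < q) (hr : (p : ℝ) / q < heckeMahlerBound lam mu) : p < q := by
  suffices (p : ℝ) / q < 1 by rwa [div_lt_one (by positivity), Nat.cast_lt] at this
  unfold heckeMahlerBound at hr
  split_ifs at hr with h
  · exact hr
  · have hlog : 0 ≤ Real.log lam + Real.log mu := by
      rw [← Real.log_mul hlam0.ne' hmu.ne']; exact Real.log_nonneg (not_lt.1 h)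
    have hmu1 : 0 < Real.log mu := Real.log_pos (by nlinarith)
    exact hr.trans_le ((div_le_one hmu1).2 (by linarith))

theorem pow_mul_pow_lt_one_of_div_lt_heckeMahlerBound {lam mu : ℝ} {p q : ℕ} (hlam0 : 0 < lam)
    (hlam1 : lam < 1) (hmu : 0 < mu) (hp : 0 < p) (hq : 0 < q)
    (hr : (p : ℝ) / q < heckeMahlerBound lam mu) : lam ^ q * mu ^ p < 1 := by
  have hpq := lt_of_div_lt_heckeMahlerBound hlam0 hlam1 hmu hq hr
  unfold heckeMahlerBound at hr
  split_ifs at hr with h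
  · rw [← Nat.add_sub_of_le hpq.le, pow_add, mul_right_comm, ← mul_pow]
    exact mul_lt_one_of_nonneg_of_lt_one_left (by positivity) (pow_lt_one₀ (by positivity) h hp.ne')
      (pow_le_one₀ hlam0.le hlam1.le)
  · have hmu1 : 0 < Real.log mu := Real.log_pos (by nlinarith)
    rw [div_lt_div_iff₀ (by positivity) hmu1] at hr
    rw [← Real.log_neg_iff (by positivity), Real.log_mul (by positivity) (by positivity),
      Real.log_pow, Real.log_pow]
    linarith

theorem stmt14 (lam mu : ℝ) (p q : ℕ) (hlam0 : 0 < lam) (hlam1 : lam < 1) (hmu : 0 < mu)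
    (hp : 0 < p) (hq : 0 < q) (hcop : Nat.Coprime p q)
    (hr : (p : ℝ) / q < if lam * mu < 1 then 1 else -Real.log lam / Real.log mu) :
    PhiHM ((p : ℝ) / q) lam mu 0 =
      lam / (1 - lam) *
        (1 + mu * (((∑ k ∈ Finset.Icc 1 (q - 2),
            ((⌊((k : ℝ) + 1) * p / q⌋ - ⌊(k : ℝ) * p / q⌋ : ℤ) : ℝ) *
              lam ^ k * mu ^ ⌊(k : ℝ) * p / q⌋) + lam ^ q * mu ^ (p - 1)) /
          (1 - lam ^ q * mu ^ p))) := by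
  have hpq := lt_of_div_lt_heckeMahlerBound hlam0 hlam1 hmu hq hr
  have hrate := pow_mul_pow_lt_one_of_div_lt_heckeMahlerBound hlam0 hlam1 hmu hp hq hr
  rw [PhiHM_natCast_div_eq hlam0.le hlam1 hmu.le hp hq hrate, range_eq_Ico,
    sum_eq_sum_Ico_succ_bot hp, sum_Ico_pow_mul_pow_div_eq hp hpq hcop]
  simp only [← Nat.cast_mul, ← Nat.cast_add_one, floor_natCast_div_natCast_eq, zpow_natCast,
    zero_mul, Nat.zero_div, pow_zero, mul_one]
  have hrate' : 1 - lam ^ q * mu ^ p ≠ 0 := by linarith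
  congr 1
  rw [mul_div_assoc', one_add_div hrate', ← pow_sub_mul_pow mu hp, pow_one]
  ring
end

section
/- Let (x_k)_{k≥0} be the forward orbit of x under the lift F. For all non-negative integers l, n: x_{l+n} = ⌊x_{l+n}⌋ + λ^n μ^{⌊x_{l+n}⌋−⌊x_l⌋}({x_l} − (1−δ)/λ) + (1−δ)/λ + Σ_{k=0}^{n−1} λ^k μ^{⌊x_{l+n}⌋−⌊x_{l+n−k}⌋}((λ+δ−1)/λ + ⌊x_{l+n−(k+1)}⌋ − ⌊x_{l+n−k}⌋). -/
/-!
Write `η = (1 - δ) / λ` and `e_j = {x_j} - η`. On the branch `{y} < η` the map is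
`y ↦ ⌊y⌋ + (λ {y} + δ)` with `0 ≤ λ {y} + δ < 1`; on the other it is
`y ↦ ⌊y⌋ + 1 + μ (λ {y} + δ - 1)`, and the bound `δ < d_{λ,μ}` is exactly what gives
`μ (λ + δ - 1) ≤ 1`, so the jump term again lies in `[0, 1)`. Hence
`e_{j+1} = λ μ^{⌊x_{j+1}⌋ - ⌊x_j⌋} e_j + (λ + δ - 1) / λ + ⌊x_j⌋ - ⌊x_{j+1}⌋`, and unrolling this
affine recurrence the products of the multipliers telescope to `λ^k μ^{⌊x_{l+n}⌋ - ⌊x_{l+n-k}⌋}`.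
-/

/-- The lift F of the 2-interval piecewise affine map. -/
noncomputable def liftF (lam mu del : ℝ) (x : ℝ) : ℝ :=
  if Int.fract x < (1 - del) / lam then lam * x + del + (1 - lam) * (⌊x⌋ : ℝ)
  else mu * (lam * x + del - 1) + 1 + (1 - lam * mu) * (⌊x⌋ : ℝ)

theorem eq_pow_mul_add_sum_of_succ_eq {lam mu b : ℝ} {e : ℕ → ℝ} {f : ℕ → ℤ} (hmu : mu ≠ 0)
    (he : ∀ j, e (j + 1) = lam * mu ^ (f (j + 1) - f j) * e j + (b + (f j - f (j + 1)))) (l n : ℕ) :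
    e (l + n) = lam ^ n * mu ^ (f (l + n) - f l) * e l +
      ∑ k ∈ Finset.range n, lam ^ k * mu ^ (f (l + n) - f (l + n - k)) *
        (b + (f (l + n - (k + 1)) - f (l + n - k))) := by
  induction n with
  | zero => simp
  | succ n ih =>
    have hshift : ∀ k ∈ Finset.range n,
        lam ^ (k + 1) * mu ^ (f (l + (n + 1)) - f (l + (n + 1) - (k + 1))) *
            (b + (f (l + (n + 1) - (k + 1 + 1)) - f (l + (n + 1) - (k + 1)))) =
          lam * mu ^ (f (l + n + 1) - f (l + n)) *
            (lam ^ k * mu ^ (f (l + n) - f (l + n - k)) *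
              (b + (f (l + n - (k + 1)) - f (l + n - k)))) := by
      intro k hk
      have hk : k < n := Finset.mem_range.mp hk
      rw [show l + (n + 1) - (k + 1) = l + n - k by omega,
        show l + (n + 1) - (k + 1 + 1) = l + n - (k + 1) by omega, ← add_assoc,
        ← sub_add_sub_cancel (f (l + n + 1)) (f (l + n)), zpow_add₀ hmu]
      ring
    rw [Finset.sum_range_succ', Finset.sum_congr rfl hshift, ← Finset.mul_sum, ← add_assoc, he, ih,
      ← sub_add_sub_cancel (f (l + n + 1)) (f (l + n)) (f l), zpow_add₀ hmu]
    simp only [Nat.sub_zero, add_tsub_cancel_right, ← add_assoc, sub_self, zpow_zero, pow_zero,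
      pow_succ]
    ring

theorem mu_mul_lam_add_del_sub_one_le_one {lam mu del : ℝ} (hlam1 : lam < 1) (hmu : 0 < mu)
    (hdel2 : del < if lam * mu < 1 then 1 else (mu - lam * mu) / (mu - 1)) :
    mu * (lam + del - 1) ≤ 1 := by
  split_ifs at hdel2 with hlam_mu
  · nlinarith
  · have hmu1 : 1 < mu := by nlinarith
    rw [lt_div_iff₀ (by linarith)] at hdel2
    nlinarith

theorem liftF_eq_floor_add_one_add {lam mu del : ℝ} (hlam0 : 0 < lam) (hlam1 : lam < 1)
    (hmu : 0 < mu) (hdel1 : 1 - lam < del)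
    (hdel2 : del < if lam * mu < 1 then 1 else (mu - lam * mu) / (mu - 1)) (y : ℝ) :
    liftF lam mu del y = ⌊y⌋ + 1 +
      lam * mu ^ (⌊liftF lam mu del y⌋ - ⌊y⌋) * (Int.fract y - (1 - del) / lam) := by
  have hfract : Int.fract y = y - ⌊y⌋ := rfl
  have hfract_nonneg := Int.fract_nonneg y
  have hfract_lt := Int.fract_lt_one y
  rw [liftF]
  split_ifs with hfr
  · rw [lt_div_iff₀ hlam0] at hfr
    have hbranch : lam * y + del + (1 - lam) * ⌊y⌋ = ⌊y⌋ + (lam * Int.fract y + del) := by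
      rw [hfract]; ring
    have hfloor : ⌊lam * y + del + (1 - lam) * ⌊y⌋⌋ = ⌊y⌋ := by
      rw [Int.floor_eq_iff, hbranch]
      constructor <;> nlinarith
    rw [hfloor, sub_self, zpow_zero, hbranch]
    field_simp
    ring
  · rw [not_lt, div_le_iff₀ hlam0] at hfr
    have hmu_le := mu_mul_lam_add_del_sub_one_le_one hlam1 hmu hdel2
    have hbranch : mu * (lam * y + del - 1) + 1 + (1 - lam * mu) * ⌊y⌋ =
        ⌊y⌋ + 1 + mu * (lam * Int.fract y + del - 1) := by
      rw [hfract]; ring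
    have hfloor : ⌊mu * (lam * y + del - 1) + 1 + (1 - lam * mu) * ⌊y⌋⌋ = ⌊y⌋ + 1 := by
      rw [Int.floor_eq_iff, hbranch]
      push_cast
      constructor
      · nlinarith
      · nlinarith [mul_lt_mul_of_pos_left (mul_lt_of_lt_one_right hlam0 hfract_lt) hmu]
    rw [hfloor, add_sub_cancel_left, zpow_one, hbranch]
    field_simp
    ring

theorem fract_liftF_sub {lam mu del : ℝ} (hlam0 : 0 < lam) (hlam1 : lam < 1)
    (hmu : 0 < mu) (hdel1 : 1 - lam < del)
    (hdel2 : del < if lam * mu < 1 then 1 else (mu - lam * mu) / (mu - 1)) (y : ℝ) :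
    Int.fract (liftF lam mu del y) - (1 - del) / lam =
      lam * mu ^ (⌊liftF lam mu del y⌋ - ⌊y⌋) * (Int.fract y - (1 - del) / lam) +
        ((lam + del - 1) / lam + (⌊y⌋ - ⌊liftF lam mu del y⌋)) := by
  rw [show Int.fract (liftF lam mu del y) = liftF lam mu del y - ⌊liftF lam mu del y⌋ from rfl]
  nth_rewrite 1 [liftF_eq_floor_add_one_add hlam0 hlam1 hmu hdel1 hdel2 y]
  field_simp
  ring

theorem stmt16 (lam mu del : ℝ) (hlam0 : 0 < lam) (hlam1 : lam < 1) (hmu : 0 < mu)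
    (hdel1 : 1 - lam < del)
    (hdel2 : del < if lam * mu < 1 then 1 else (mu - lam * mu) / (mu - 1))
    (x : ℝ) :
    ∀ l n : ℕ,
      (liftF lam mu del)^[l + n] x =
        (⌊(liftF lam mu del)^[l + n] x⌋ : ℝ) +
          lam ^ n * mu ^ (⌊(liftF lam mu del)^[l + n] x⌋ - ⌊(liftF lam mu del)^[l] x⌋) *
            (Int.fract ((liftF lam mu del)^[l] x) - (1 - del) / lam) +
          (1 - del) / lam +
          ∑ k ∈ Finset.range n,
            lam ^ k *
              mu ^ (⌊(liftF lam mu del)^[l + n] x⌋ - ⌊(liftF lam mu del)^[l + n - k] x⌋) *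
              ((lam + del - 1) / lam +
                ((⌊(liftF lam mu del)^[l + n - (k + 1)] x⌋ : ℝ) -
                  (⌊(liftF lam mu del)^[l + n - k] x⌋ : ℝ))) := by
  intro l n
  set F := liftF lam mu del
  have hunroll := eq_pow_mul_add_sum_of_succ_eq hmu.ne'
    (b := (lam + del - 1) / lam) (e := fun j ↦ Int.fract (F^[j] x) - (1 - del) / lam)
    (f := fun j ↦ ⌊F^[j] x⌋)
    (fun j ↦ by
      simp only [Function.iterate_succ_apply']
      exact fract_liftF_sub hlam0 hlam1 hmu hdel1 hdel2 _) l n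
  linarith [Int.floor_add_fract (F^[l + n] x)]
end
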